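/- arXiv:1803.07649 — 10 statements merged into one kernel-verified Lean document; each statement's English description precedes it below -/
import Mathlib

section
/- Let s̃ be the greedy schedule: s̃_i(0) = 0 and, for each t = 1,…,T, the vector (s̃_i(t))_{i=1}^N minimizes ∑_{i=1}^N [f_{i,t}(x_i) + β_i·max(x_i − s̃_i(t−1), 0)] over the set {x ∈ ℝ^N : x_i ≥ 0 for all i, ∑_{i=1}^N x_i ≥ D(t)}. Then for every feasible schedule s, the total cost of s̃ is at most (1 + β/e₀) times the total cost of s, where β = max_i β_i and e₀ = min_i e_{0,i}. -/
/-! At every slot the greedy step could instead have moved to `s(t)`. Since the greedy state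
`s̃(t-1)` is nonnegative, that move costs at most `β · s(t) ≤ (β/e₀) · f(s(t))` in switching,
so the greedy cost of slot `t` is at most `(1 + β/e₀)` times the operating cost of `s` at `t`,
and summing over the slots gives the bound. -/

open Finset

lemma mul_max_sub_le_div_mul {b B E e x y c : ℝ} (hb : 0 ≤ b) (hbB : b ≤ B) (hE : 0 < E)
    (hEe : E ≤ e) (hx : 0 ≤ x) (hy : 0 ≤ y) (hc : e * x ≤ c) :
    b * max (x - y) 0 ≤ B / E * c := by
  have hBE : 0 ≤ B / E := div_nonneg (hb.trans hbB) hE.le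
  calc b * max (x - y) 0 ≤ B * x :=
        mul_le_mul hbB (max_le (by linarith) hx) (le_max_right _ _) (hb.trans hbB)
    _ = B / E * (E * x) := by field_simp
    _ ≤ B / E * (e * x) := by gcongr
    _ ≤ B / E * c := by gcongr

lemma sum_cost_add_switch_le {ι : Type*} [Fintype ι] (g : ι → ℝ → ℝ) (β e : ι → ℝ)
    {B E : ℝ} (x y z : ι → ℝ) (hβ : ∀ i, 0 ≤ β i) (hβB : ∀ i, β i ≤ B) (hB : 0 ≤ B)
    (hE : 0 < E) (hEe : ∀ i, E ≤ e i) (hx : ∀ i, 0 ≤ x i) (hy : ∀ i, 0 ≤ y i)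
    (hg : ∀ i, e i * x i ≤ g i (x i)) :
    ∑ i, (g i (x i) + β i * max (x i - y i) 0) ≤
      (1 + B / E) * ∑ i, (g i (x i) + β i * max (x i - z i) 0) :=
  calc ∑ i, (g i (x i) + β i * max (x i - y i) 0)
      ≤ ∑ i, (g i (x i) + B / E * g i (x i)) :=
        sum_le_sum fun i _ => add_le_add le_rfl <|
          mul_max_sub_le_div_mul (hβ i) (hβB i) hE (hEe i) (hx i) (hy i) (hg i)
    _ = (1 + B / E) * ∑ i, g i (x i) := by
        rw [mul_sum]
        exact sum_congr rfl fun i _ => by ring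
    _ ≤ (1 + B / E) * ∑ i, (g i (x i) + β i * max (x i - z i) 0) := by
        have : 0 ≤ 1 + B / E := by positivity
        gcongr with i
        exact le_add_of_nonneg_right (mul_nonneg (hβ i) (le_max_right _ _))

theorem greedy_competitive_general
    (N T : ℕ)
    (f : Fin N → ℕ → ℝ → ℝ)
    (e0i : Fin N → ℝ) (he0i : ∀ i, 0 < e0i i)
    (hflb : ∀ i t x, 0 ≤ x → e0i i * x ≤ f i t x)
    (β : Fin N → ℝ) (hβ : ∀ i, 0 ≤ β i)
    (D : ℕ → ℝ)
    (βmax : ℝ) (hβmax : IsGreatest (Set.range β) βmax)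
    (e0 : ℝ) (he0 : IsLeast (Set.range e0i) e0)
    -- the greedy schedule s̃
    (st : Fin N → ℕ → ℝ)
    (hst0 : ∀ i, st i 0 = 0)
    (hgreedy : ∀ t ∈ Finset.Icc 1 T,
      (∀ i, 0 ≤ st i t) ∧ D t ≤ ∑ i, st i t ∧
      ∀ x : Fin N → ℝ, (∀ i, 0 ≤ x i) → D t ≤ ∑ i, x i →
        ∑ i, (f i t (st i t) + β i * max (st i t - st i (t - 1)) 0) ≤
          ∑ i, (f i t (x i) + β i * max (x i - st i (t - 1)) 0)) :
    -- for every feasible schedule s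
    ∀ s : Fin N → ℕ → ℝ,
      (∀ i, s i 0 = 0) →
      (∀ i, ∀ t ∈ Finset.Icc 1 T, 0 ≤ s i t) →
      (∀ t ∈ Finset.Icc 1 T, D t ≤ ∑ i, s i t) →
      ∑ t ∈ Finset.Icc 1 T, ∑ i,
          (f i t (st i t) + β i * max (st i t - st i (t - 1)) 0) ≤
        (1 + βmax / e0) *
          ∑ t ∈ Finset.Icc 1 T, ∑ i,
            (f i t (s i t) + β i * max (s i t - s i (t - 1)) 0) := by
  intro s _ hs hsD
  have he0_pos : 0 < e0 := by
    obtain ⟨j, rfl⟩ := he0.1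
    exact he0i j
  have hβmax_nonneg : 0 ≤ βmax := by
    obtain ⟨j, rfl⟩ := hβmax.1
    exact hβ j
  have hst_prev : ∀ t ∈ Icc 1 T, ∀ i, 0 ≤ st i (t - 1) := by
    intro t ht i
    rcases Nat.eq_zero_or_pos (t - 1) with h | h
    · rw [h, hst0]
    · exact (hgreedy (t - 1) (mem_Icc.mpr ⟨h, (Nat.sub_le t 1).trans (mem_Icc.mp ht).2⟩)).1 i
  rw [mul_sum]
  refine sum_le_sum fun t ht => ?_
  obtain ⟨-, -, hopt⟩ := hgreedy t ht
  exact (hopt _ (hs · t ht) (hsD t ht)).trans <|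
    sum_cost_add_switch_le (fun i => f i t) β e0i _ _ _ hβ (fun i => hβmax.2 ⟨i, rfl⟩)
      hβmax_nonneg he0_pos (fun i => he0.2 ⟨i, rfl⟩) (hs · t ht) (hst_prev t ht)
      (fun i => hflb i t _ (hs i t ht))

/-- Theorem 1 (greedy / AFHC without look-ahead): the greedy schedule is
`(1 + β/e₀)`-competitive, where `β = max_i β_i` and `e₀ = min_i e_{0,i}`. -/
theorem greedy_competitive
    (N T : ℕ) (hN : 1 ≤ N) (hT : 1 ≤ T)
    (f : Fin N → ℕ → ℝ → ℝ)
    (hconv : ∀ i t, ConvexOn ℝ Set.univ (f i t))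
    (hmono : ∀ i t, Monotone (f i t))
    (e0i : Fin N → ℝ) (he0i : ∀ i, 0 < e0i i)
    (hflb : ∀ i t x, 0 ≤ x → e0i i * x ≤ f i t x)
    (β : Fin N → ℝ) (hβ : ∀ i, 0 ≤ β i)
    (D : ℕ → ℝ) (hD : ∀ t, 0 ≤ D t)
    (βmax : ℝ) (hβmax : IsGreatest (Set.range β) βmax)
    (e0 : ℝ) (he0 : IsLeast (Set.range e0i) e0)
    -- the greedy schedule s̃
    (st : Fin N → ℕ → ℝ)
    (hst0 : ∀ i, st i 0 = 0)
    (hgreedy : ∀ t ∈ Finset.Icc 1 T,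
      (∀ i, 0 ≤ st i t) ∧ D t ≤ ∑ i, st i t ∧
      ∀ x : Fin N → ℝ, (∀ i, 0 ≤ x i) → D t ≤ ∑ i, x i →
        ∑ i, (f i t (st i t) + β i * max (st i t - st i (t - 1)) 0) ≤
          ∑ i, (f i t (x i) + β i * max (x i - st i (t - 1)) 0)) :
    -- for every feasible schedule s
    ∀ s : Fin N → ℕ → ℝ,
      (∀ i, s i 0 = 0) →
      (∀ i, ∀ t ∈ Finset.Icc 1 T, 0 ≤ s i t) →
      (∀ t ∈ Finset.Icc 1 T, D t ≤ ∑ i, s i t) →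
      ∑ t ∈ Finset.Icc 1 T, ∑ i,
          (f i t (st i t) + β i * max (st i t - st i (t - 1)) 0) ≤
        (1 + βmax / e0) *
          ∑ t ∈ Finset.Icc 1 T, ∑ i,
            (f i t (s i t) + β i * max (s i t - s i (t - 1)) 0) :=
  greedy_competitive_general N T f e0i he0i hflb β hβ D βmax hβmax e0 he0 st hst0 hgreedy
end

section
/- Let s̃ be the online regularization schedule: s̃_i(0) = 0 and, for each t = 1,…,T, the vector (s̃_i(t))_{i=1}^N minimizes the regularized per-slot objective over P_t; assume moreover that the online schedule meets demand with equality, ∑_{i=1}^N s̃_i(t) = D(t) for every t. Define C = (∑_{t=1}^T ∑_{i=1}^N (β_i/η)·ln((s̃_i(t)+ε/N)/(s̃_i(t−1)+ε/N))·s̃_i(t)) / (∑_{t=1}^T D(t)). Then for every feasible schedule s, the total cost of s̃ is at most (1 + β/(e₀ + C)) times the total cost of s, where β = max_i β_i and e₀ = min_i e_{0,i}. -/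
/-!
Write `δ = ε/N` and `L_i(t) = log ((s̃_i(t) + δ)/(s̃_i(t-1) + δ))`, so that `(β_i/η) L_i(t)` is
the gradient of the regularizer at `s̃(t)`. Since `s̃(t)` minimizes a convex objective over the
convex set `P_t`, the first-order condition against `s(t) ∈ P_t` reads
`Σ_i f_{i,t}(s̃_i(t)) + Σ_i (β_i/η) L_i(t) s̃_i(t) ≤ Σ_i f_{i,t}(s_i(t)) + Σ_i (β_i/η) L_i(t) s_i(t)`.
Summed over `t`, the gradient terms on the left make up `C·ΣD`. On the right, `L_i(t)` is the
increment of the potential `log ((s̃_i(t) + δ)/δ) ∈ [0, η]`, so by Abel summation `Σ_t L_i(t) s_i(t)`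
is at most `η` times the total increase of `s_i`: the gradient terms are bounded by the switching
cost of `s`. Hence `(e₀ + C)·ΣD ≤ cost(s)`, while the operational cost of `s̃` is at least `e₀·ΣD`
and its switching cost at most `β·ΣD`. Finally `C ≥ 0`, as `x_t log ((x_t + δ)/(x_{t-1} + δ))`
dominates the increment of `x - δ log ((x + δ)/δ) ≥ 0`.
-/

open Real Filter Topology Finset

lemma Real.sub_le_mul_log_div {u v : ℝ} (hu : 0 < u) (hv : 0 < v) : u - v ≤ u * log (u / v) :=
  calc u - v = u * (1 - (u / v)⁻¹) := by field_simp
    _ ≤ u * log (u / v) :=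
      mul_le_mul_of_nonneg_left (one_sub_inv_le_log_of_pos (div_pos hu hv)) hu.le

lemma Real.log_div_sub_log_div_cancel {a b δ : ℝ} (ha : 0 < a) (hb : 0 < b) (hδ : 0 < δ) :
    log (a / δ) - log (b / δ) = log (a / b) := by
  rw [← log_div (div_pos ha hδ).ne' (div_pos hb hδ).ne', div_div_div_cancel_right₀ hδ.ne']

-- The Bregman divergence of `u ↦ u log (u / w) - u` is at most the χ²-distance `(u - v)² / v`.
lemma Real.mul_log_div_sub_le {u v w : ℝ} (hu : 0 < u) (hv : 0 < v) (hw : 0 < w) :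
    u * log (u / w) - u - (v * log (v / w) - v) ≤ log (v / w) * (u - v) + (u - v) ^ 2 / v := by
  have hsplit : log (u / w) = log (u / v) + log (v / w) := by
    rw [← log_mul (div_pos hu hv).ne' (div_pos hv hw).ne', div_mul_div_cancel₀ hv.ne']
  have hχ : u * log (u / v) ≤ u * (u / v - 1) :=
    mul_le_mul_of_nonneg_left (log_le_sub_one_of_pos (div_pos hu hv)) hu.le
  have hsq : u * (u / v - 1) - (u - v) = (u - v) ^ 2 / v := by field_simp
  rw [hsplit]
  linarith

lemma Finset.sum_Icc_one_sub_pred (W : ℕ → ℝ) (T : ℕ) :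
    ∑ t ∈ Icc 1 T, (W t - W (t - 1)) = W T - W 0 := by
  induction T with
  | zero => simp
  | succ n ih => rw [sum_Icc_succ_top (by omega), ih, Nat.add_sub_cancel]; ring

-- Abel summation; `s t (η - G t) ≥ 0` is what `G` can still pay to the mass present at time `t`.
lemma sum_mul_sub_pred_le_mul_sum_max {T : ℕ} {s G : ℕ → ℝ} {η : ℝ}
    (hG : ∀ t ≤ T, G t ∈ Set.Icc 0 η) (hs0 : s 0 = 0) (hsT : 0 ≤ s T) :
    ∑ t ∈ Icc 1 T, (G t - G (t - 1)) * s t ≤ η * ∑ t ∈ Icc 1 T, max (s t - s (t - 1)) 0 := by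
  set W : ℕ → ℝ := fun t ↦ -(s t * (η - G t))
  have hstep : ∀ t ∈ Icc 1 T, (G t - G (t - 1)) * s t ≤
      η * max (s t - s (t - 1)) 0 + (W t - W (t - 1)) := by
    intro t ht
    obtain ⟨hG0, hGη⟩ := hG (t - 1) (by have := (mem_Icc.1 ht).2; omega)
    have hmax := le_max_left (s t - s (t - 1)) 0
    have hmax0 := le_max_right (s t - s (t - 1)) 0
    simp only [W]
    nlinarith [mul_le_mul_of_nonneg_right hmax (sub_nonneg.2 hGη), mul_nonneg hG0 hmax0]
  calc _ ≤ ∑ t ∈ Icc 1 T, (η * max (s t - s (t - 1)) 0 + (W t - W (t - 1))) := sum_le_sum hstep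
    _ = η * ∑ t ∈ Icc 1 T, max (s t - s (t - 1)) 0 + (W T - W 0) := by
      rw [sum_add_distrib, sum_Icc_one_sub_pred, mul_sum]
    _ ≤ _ := by
      have hbudget := mul_nonneg hsT (sub_nonneg.2 (hG T le_rfl).2)
      simp only [W, hs0]
      linarith

lemma sum_log_ratio_mul_le {T : ℕ} {x s : ℕ → ℝ} {δ M η : ℝ} (hδ : 0 < δ)
    (hx : ∀ t ≤ T, x t ∈ Set.Icc 0 M) (hη : log ((M + δ) / δ) ≤ η) (hs0 : s 0 = 0)
    (hsT : 0 ≤ s T) :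
    ∑ t ∈ Icc 1 T, log ((x t + δ) / (x (t - 1) + δ)) * s t ≤
      η * ∑ t ∈ Icc 1 T, max (s t - s (t - 1)) 0 := by
  have hG : ∀ t ≤ T, log ((x t + δ) / δ) ∈ Set.Icc 0 η := fun t ht ↦ by
    obtain ⟨h0, hM⟩ := hx t ht
    exact ⟨log_nonneg ((le_div_iff₀ hδ).2 (by linarith)),
      (log_le_log (by positivity) (by gcongr)).trans hη⟩
  refine le_of_eq_of_le (sum_congr rfl fun t ht ↦ ?_) (sum_mul_sub_pred_le_mul_sum_max hG hs0 hsT)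
  have hcur := (hx t (mem_Icc.1 ht).2).1
  have hprev := (hx (t - 1) (by have := (mem_Icc.1 ht).2; omega)).1
  rw [log_div_sub_log_div_cancel (by linarith) (by linarith) hδ]

lemma sum_log_ratio_mul_self_nonneg {T : ℕ} {x : ℕ → ℝ} {δ : ℝ} (hδ : 0 < δ) (hx0 : x 0 = 0)
    (hx : ∀ t ≤ T, 0 ≤ x t) :
    0 ≤ ∑ t ∈ Icc 1 T, log ((x t + δ) / (x (t - 1) + δ)) * x t := by
  set Ψ : ℕ → ℝ := fun t ↦ x t - δ * log ((x t + δ) / δ)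
  have hstep : ∀ t ∈ Icc 1 T, Ψ t - Ψ (t - 1) ≤ log ((x t + δ) / (x (t - 1) + δ)) * x t := by
    intro t ht
    have hu : 0 < x t + δ := by linarith [hx t (mem_Icc.1 ht).2]
    have hv : 0 < x (t - 1) + δ := by linarith [hx (t - 1) (by have := (mem_Icc.1 ht).2; omega)]
    have hlog := sub_le_mul_log_div hu hv
    have hsplit := log_div_sub_log_div_cancel hu hv hδ
    simp only [Ψ]
    nlinarith
  have hΨT : 0 ≤ Ψ T := by
    have hlog := log_le_sub_one_of_pos (div_pos (by linarith [hx T le_rfl]) hδ : 0 < (x T + δ) / δ)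
    have hδx : δ * ((x T + δ) / δ - 1) = x T := by field_simp; ring
    simp only [Ψ]
    linarith [mul_le_mul_of_nonneg_left hlog hδ.le]
  calc 0 ≤ Ψ T - Ψ 0 := by simpa [Ψ, hx0] using hΨT
    _ = ∑ t ∈ Icc 1 T, (Ψ t - Ψ (t - 1)) := (sum_Icc_one_sub_pred Ψ T).symm
    _ ≤ _ := sum_le_sum hstep

-- First-order optimality: `g` bounds the derivative of `R` at `a` in the direction `s - a`.
-- Compare `a` with `(1 - θ) • a + θ • s` and let `θ → 0⁺`.
theorem ConvexOn.le_add_of_isMinOn_add {E : Type*} [AddCommGroup E] [Module ℝ E] {K : Set E}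
    {F R : E → ℝ} (hF : ConvexOn ℝ K F) {a s : E} (ha : a ∈ K) (hs : s ∈ K)
    (hmin : IsMinOn (F + R) K a) {g M : ℝ}
    (hR : ∀ θ ∈ Set.Ioc (0 : ℝ) 1, R ((1 - θ) • a + θ • s) ≤ R a + θ * g + θ ^ 2 * M) :
    F a ≤ F s + g := by
  have hθ : ∀ θ ∈ Set.Ioc (0 : ℝ) 1, F a ≤ F s + g + θ * M := by
    rintro θ ⟨hθ0, hθ1⟩
    have hmem := hF.1 ha hs (sub_nonneg.2 hθ1) hθ0.le (by ring)
    have hopt := isMinOn_iff.1 hmin _ hmem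
    have hconv := hF.2 ha hs (sub_nonneg.2 hθ1) hθ0.le (by ring)
    have hreg := hR θ ⟨hθ0, hθ1⟩
    simp only [Pi.add_apply, smul_eq_mul] at hopt hconv
    refine le_of_mul_le_mul_left ?_ hθ0
    linarith
  have hlim : Tendsto (fun θ : ℝ ↦ F s + g + θ * M) (𝓝[>] 0) (𝓝 (F s + g)) := by
    have : Continuous (fun θ : ℝ ↦ F s + g + θ * M) := by fun_prop
    simpa using (this.tendsto 0).mono_left nhdsWithin_le_nhds
  exact ge_of_tendsto hlim (eventually_of_mem (Ioc_mem_nhdsGT zero_lt_one) hθ)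

lemma add_le_one_add_div_mul {A B O S e C b : ℝ} (he : 0 < e) (hC : 0 ≤ C) (hb : 0 ≤ b)
    (hS : 0 ≤ S) (hA : e * S ≤ A) (hAO : A + C * S ≤ O) (hB : B ≤ b * S) :
    A + B ≤ (1 + b / (e + C)) * O := by
  have hO : (e + C) * S ≤ O := by linarith
  have hbO : b * S ≤ b / (e + C) * O := by
    rw [div_mul_eq_mul_div, le_div_iff₀ (by positivity)]
    nlinarith [mul_le_mul_of_nonneg_left hO hb]
  nlinarith [mul_nonneg hC hS]

variable {ι : Type*} [Fintype ι]

lemma ConvexOn.sum_comp_apply {f : ι → ℝ → ℝ} (hf : ∀ i, ConvexOn ℝ Set.univ (f i)) :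
    ConvexOn ℝ Set.univ (fun x : ι → ℝ ↦ ∑ i, f i (x i)) := by
  refine ⟨convex_univ, fun x _ y _ a b ha hb hab ↦ ?_⟩
  simp only [Pi.add_apply, Pi.smul_apply, smul_eq_mul, mul_sum, ← sum_add_distrib]
  exact sum_le_sum fun i _ ↦ (hf i).2 trivial trivial ha hb hab

-- The regularizer of the slot problem, with `δ = ε / N` and `c` the previous point.
noncomputable def entropicReg (β : ι → ℝ) (δ : ℝ) (c x : ι → ℝ) : ℝ :=
  ∑ i, β i * ((x i + δ) * log ((x i + δ) / (c i + δ)) - x i)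

def demandSet (d : ℝ) : Set (ι → ℝ) := {x | (∀ i, 0 ≤ x i) ∧ d ≤ ∑ i, x i}

lemma convex_demandSet (d : ℝ) : Convex ℝ (demandSet (ι := ι) d) := by
  rintro x ⟨hx0, hxd⟩ y ⟨hy0, hyd⟩ a b ha hb hab
  refine ⟨fun i ↦ ?_, ?_⟩
  · simp only [Pi.add_apply, Pi.smul_apply, smul_eq_mul]
    have := hx0 i; have := hy0 i; positivity
  · simp only [Pi.add_apply, Pi.smul_apply, smul_eq_mul, sum_add_distrib, ← mul_sum]
    calc d = a * d + b * d := by rw [← add_mul, hab, one_mul]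
      _ ≤ _ := add_le_add (mul_le_mul_of_nonneg_left hxd ha) (mul_le_mul_of_nonneg_left hyd hb)

lemma entropicReg_convexComb_le {β : ι → ℝ} (hβ : ∀ i, 0 ≤ β i) {δ : ℝ} {a c s : ι → ℝ}
    (ha : ∀ i, 0 < a i + δ) (hc : ∀ i, 0 < c i + δ) (hs : ∀ i, 0 < s i + δ) {θ : ℝ}
    (hθ : θ ∈ Set.Icc (0 : ℝ) 1) :
    entropicReg β δ c ((1 - θ) • a + θ • s) ≤ entropicReg β δ c a
      + θ * ∑ i, β i * log ((a i + δ) / (c i + δ)) * (s i - a i)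
      + θ ^ 2 * ∑ i, β i * ((s i - a i) ^ 2 / (a i + δ)) := by
  obtain ⟨hθ0, hθ1⟩ := hθ
  simp only [entropicReg, mul_sum, ← sum_add_distrib]
  refine sum_le_sum fun i _ ↦ ?_
  simp only [Pi.add_apply, Pi.smul_apply, smul_eq_mul]
  have hx : 0 < (1 - θ) * a i + θ * s i + δ := by
    have := convex_Ioi (0 : ℝ) (ha i) (hs i) (sub_nonneg.2 hθ1) hθ0 (by ring)
    simp only [Set.mem_Ioi, smul_eq_mul] at this
    linarith
  have key := mul_log_div_sub_le hx (ha i) (hc i)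
  rw [show (1 - θ) * a i + θ * s i + δ - (a i + δ) = θ * (s i - a i) by ring] at key
  linear_combination mul_le_mul_of_nonneg_left key (hβ i)

theorem sum_add_sum_log_ratio_mul_le_of_isMinOn {f : ι → ℝ → ℝ}
    (hf : ∀ i, ConvexOn ℝ Set.univ (f i)) {β : ι → ℝ} (hβ : ∀ i, 0 ≤ β i) {δ η : ℝ} (hη : 0 ≤ η)
    {K : Set (ι → ℝ)} (hK : Convex ℝ K) {a c s : ι → ℝ} (ha : a ∈ K) (hs : s ∈ K)
    (ha' : ∀ i, 0 < a i + δ) (hc' : ∀ i, 0 < c i + δ) (hs' : ∀ i, 0 < s i + δ)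
    (hmin : IsMinOn (fun x ↦ ∑ i, f i (x i) + 1 / η * entropicReg β δ c x) K a) :
    ∑ i, f i (a i) + ∑ i, β i / η * log ((a i + δ) / (c i + δ)) * a i ≤
      ∑ i, f i (s i) + ∑ i, β i / η * log ((a i + δ) / (c i + δ)) * s i := by
  set L : ι → ℝ := fun i ↦ log ((a i + δ) / (c i + δ))
  have hg : 1 / η * ∑ i, β i * L i * (s i - a i) =
      ∑ i, β i / η * L i * s i - ∑ i, β i / η * L i * a i := by
    rw [mul_sum, ← sum_sub_distrib]
    exact sum_congr rfl fun i _ ↦ by ring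
  have hR : ∀ θ ∈ Set.Ioc (0 : ℝ) 1, 1 / η * entropicReg β δ c ((1 - θ) • a + θ • s) ≤
      1 / η * entropicReg β δ c a + θ * (1 / η * ∑ i, β i * L i * (s i - a i)) +
      θ ^ 2 * (1 / η * ∑ i, β i * ((s i - a i) ^ 2 / (a i + δ))) := fun θ hθ ↦ by
    have hscaled := mul_le_mul_of_nonneg_left
      (entropicReg_convexComb_le hβ ha' hc' hs' (Set.Ioc_subset_Icc_self hθ)) (one_div_nonneg.2 hη)
    linarith
  have hF := (ConvexOn.sum_comp_apply hf).subset (Set.subset_univ K) hK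
  have hfirst := hF.le_add_of_isMinOn_add ha hs hmin hR
  rw [hg] at hfirst
  linarith

lemma mul_sum_le_sum_sum_of_mul_le {τ : Type*} {S : Finset τ} {f : ι → τ → ℝ → ℝ} {e : ι → ℝ}
    {e₀ : ℝ} (he : ∀ i, e₀ ≤ e i) (hf : ∀ i t x, 0 ≤ x → e i * x ≤ f i t x) {x : ι → τ → ℝ}
    {D : τ → ℝ} (hx : ∀ t ∈ S, ∀ i, 0 ≤ x i t) (hxD : ∀ t ∈ S, ∑ i, x i t = D t) :
    e₀ * ∑ t ∈ S, D t ≤ ∑ t ∈ S, ∑ i, f i t (x i t) := by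
  rw [mul_sum]
  refine sum_le_sum fun t ht ↦ ?_
  rw [← hxD t ht, mul_sum]
  exact sum_le_sum fun i _ ↦
    (mul_le_mul_of_nonneg_right (he i) (hx t ht i)).trans (hf i t _ (hx t ht i))

section Schedules

variable {T : ℕ} {β : ι → ℝ} {δ η : ℝ}

theorem sum_sum_add_sum_sum_log_ratio_mul_le_of_isMinOn {f : ι → ℕ → ℝ → ℝ}
    (hf : ∀ i t, ConvexOn ℝ Set.univ (f i t)) (hβ : ∀ i, 0 ≤ β i) (hδ : 0 < δ) (hη : 0 ≤ η)
    {D : ℕ → ℝ} {x s : ι → ℕ → ℝ} (hx : ∀ i t, t ≤ T → 0 ≤ x i t)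
    (hxD : ∀ t ∈ Icc 1 T, (fun i ↦ x i t) ∈ demandSet (D t))
    (hmin : ∀ t ∈ Icc 1 T, IsMinOn
      (fun y ↦ ∑ i, f i t (y i) + 1 / η * entropicReg β δ (fun i ↦ x i (t - 1)) y)
      (demandSet (D t)) (fun i ↦ x i t))
    (hsD : ∀ t ∈ Icc 1 T, (fun i ↦ s i t) ∈ demandSet (D t)) :
    ∑ t ∈ Icc 1 T, ∑ i, f i t (x i t) +
        ∑ t ∈ Icc 1 T, ∑ i, β i / η * log ((x i t + δ) / (x i (t - 1) + δ)) * x i t ≤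
      ∑ t ∈ Icc 1 T, ∑ i, f i t (s i t) +
        ∑ t ∈ Icc 1 T, ∑ i, β i / η * log ((x i t + δ) / (x i (t - 1) + δ)) * s i t := by
  rw [← sum_add_distrib, ← sum_add_distrib]
  refine sum_le_sum fun t ht ↦ ?_
  have htT := (mem_Icc.1 ht).2
  exact sum_add_sum_log_ratio_mul_le_of_isMinOn (fun i ↦ hf i t) hβ hη (convex_demandSet _)
    (hxD t ht) (hsD t ht) (fun i ↦ by linarith [hx i t htT])
    (fun i ↦ by linarith [hx i (t - 1) (by omega)]) (fun i ↦ by linarith [(hsD t ht).1 i])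
    (hmin t ht)

lemma sum_sum_log_ratio_mul_le_sum_sum_mul_max (hβ : ∀ i, 0 ≤ β i) (hδ : 0 < δ) (hη : 0 < η)
    {M : ℝ} (hηM : log ((M + δ) / δ) ≤ η) {x s : ι → ℕ → ℝ}
    (hx : ∀ i t, t ≤ T → x i t ∈ Set.Icc 0 M) (hs0 : ∀ i, s i 0 = 0) (hsT : ∀ i, 0 ≤ s i T) :
    ∑ t ∈ Icc 1 T, ∑ i, β i / η * log ((x i t + δ) / (x i (t - 1) + δ)) * s i t ≤
      ∑ t ∈ Icc 1 T, ∑ i, β i * max (s i t - s i (t - 1)) 0 := by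
  rw [sum_comm, sum_comm (s := Icc 1 T)]
  refine sum_le_sum fun i _ ↦ ?_
  simp_rw [mul_assoc, ← mul_sum]
  calc β i / η * ∑ t ∈ Icc 1 T, log ((x i t + δ) / (x i (t - 1) + δ)) * s i t
      ≤ β i / η * (η * ∑ t ∈ Icc 1 T, max (s i t - s i (t - 1)) 0) :=
        mul_le_mul_of_nonneg_left (sum_log_ratio_mul_le hδ (hx i) hηM (hs0 i) (hsT i))
          (div_nonneg (hβ i) hη.le)
    _ = β i * ∑ t ∈ Icc 1 T, max (s i t - s i (t - 1)) 0 := by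
      rw [← mul_assoc, div_mul_cancel₀ _ hη.ne']

lemma sum_sum_log_ratio_mul_self_nonneg (hβ : ∀ i, 0 ≤ β i) (hδ : 0 < δ) (hη : 0 ≤ η)
    {x : ι → ℕ → ℝ} (hx0 : ∀ i, x i 0 = 0) (hx : ∀ i t, t ≤ T → 0 ≤ x i t) :
    0 ≤ ∑ t ∈ Icc 1 T, ∑ i, β i / η * log ((x i t + δ) / (x i (t - 1) + δ)) * x i t := by
  rw [sum_comm]
  refine sum_nonneg fun i _ ↦ ?_
  simp_rw [mul_assoc, ← mul_sum]
  exact mul_nonneg (div_nonneg (hβ i) hη) (sum_log_ratio_mul_self_nonneg hδ (hx0 i) (hx i))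

lemma sum_sum_mul_max_le (hβ : ∀ i, 0 ≤ β i) {b : ℝ} (hb : ∀ i, β i ≤ b) {x : ι → ℕ → ℝ}
    {D : ℕ → ℝ} (hx : ∀ i t, t ≤ T → 0 ≤ x i t) (hxD : ∀ t ∈ Icc 1 T, ∑ i, x i t = D t) :
    ∑ t ∈ Icc 1 T, ∑ i, β i * max (x i t - x i (t - 1)) 0 ≤ b * ∑ t ∈ Icc 1 T, D t := by
  rw [mul_sum]
  refine sum_le_sum fun t ht ↦ ?_
  have htT := (mem_Icc.1 ht).2
  rw [← hxD t ht, mul_sum]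
  refine sum_le_sum fun i _ ↦ ?_
  have hmax : max (x i t - x i (t - 1)) 0 ≤ x i t :=
    max_le (by linarith [hx i (t - 1) (by omega)]) (hx i t htT)
  calc β i * max (x i t - x i (t - 1)) 0 ≤ β i * x i t := mul_le_mul_of_nonneg_left hmax (hβ i)
    _ ≤ b * x i t := mul_le_mul_of_nonneg_right (hb i) (hx i t htT)

lemma mem_Icc_of_nonneg_of_sum_le {x : ι → ℕ → ℝ} {M : ℝ} (hM : 0 ≤ M) (hx0 : ∀ i, x i 0 = 0)
    (hx : ∀ t ∈ Icc 1 T, ∀ i, 0 ≤ x i t) (hxM : ∀ t ∈ Icc 1 T, ∑ i, x i t ≤ M) :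
    ∀ i t, t ≤ T → x i t ∈ Set.Icc 0 M := by
  intro i t htT
  rcases Nat.eq_zero_or_pos t with rfl | ht0
  · simpa [hx0] using hM
  · have ht : t ∈ Icc 1 T := mem_Icc.2 ⟨ht0, htT⟩
    exact ⟨hx t ht i, (single_le_sum (fun j _ ↦ hx t ht j) (mem_univ i)).trans (hxM t ht)⟩

end Schedules

theorem regularization_competitive_general
    (N T : ℕ) (hN : 1 ≤ N) (hT : 1 ≤ T)
    (f : Fin N → ℕ → ℝ → ℝ)
    (hconv : ∀ i t, ConvexOn ℝ Set.univ (f i t))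
    (e0i : Fin N → ℝ) (he0i : ∀ i, 0 < e0i i)
    (hflb : ∀ i t x, 0 ≤ x → e0i i * x ≤ f i t x)
    (β : Fin N → ℝ) (hβ : ∀ i, 0 ≤ β i)
    (D : ℕ → ℝ) (hD : ∀ t ∈ Finset.Icc 1 T, 0 < D t)
    (βmax : ℝ) (hβmax : IsGreatest (Set.range β) βmax)
    (e0 : ℝ) (he0 : IsLeast (Set.range e0i) e0)
    (ε : ℝ) (hε : 0 < ε)
    (Dmax : ℝ) (hDmax : IsGreatest {x | ∃ t ∈ Finset.Icc 1 T, D t = x} Dmax)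
    (η : ℝ) (hη : η = Real.log (1 + N * Dmax / ε))
    -- the online regularization schedule s̃
    (st : Fin N → ℕ → ℝ)
    (hst0 : ∀ i, st i 0 = 0)
    (honline : ∀ t ∈ Finset.Icc 1 T,
      (∀ i, 0 ≤ st i t) ∧ D t ≤ ∑ i, st i t ∧
      ∀ x : Fin N → ℝ, (∀ i, 0 ≤ x i) → D t ≤ ∑ i, x i →
        (∑ i, f i t (st i t)) +
            (1 / η) * ∑ i, β i *
              ((st i t + ε / N) *
                  Real.log ((st i t + ε / N) / (st i (t - 1) + ε / N)) - st i t) ≤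
          (∑ i, f i t (x i)) +
            (1 / η) * ∑ i, β i *
              ((x i + ε / N) *
                  Real.log ((x i + ε / N) / (st i (t - 1) + ε / N)) - x i))
    -- the online schedule meets demand with equality
    (heq : ∀ t ∈ Finset.Icc 1 T, ∑ i, st i t = D t)
    (C : ℝ)
    (hC : C = (∑ t ∈ Finset.Icc 1 T, ∑ i,
        (β i / η) * Real.log ((st i t + ε / N) / (st i (t - 1) + ε / N)) * st i t) /
      (∑ t ∈ Finset.Icc 1 T, D t)) :
    -- for every feasible schedule s
    ∀ s : Fin N → ℕ → ℝ,
      (∀ i, s i 0 = 0) →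
      (∀ i, ∀ t ∈ Finset.Icc 1 T, 0 ≤ s i t) →
      (∀ t ∈ Finset.Icc 1 T, D t ≤ ∑ i, s i t) →
      ∑ t ∈ Finset.Icc 1 T, ∑ i,
          (f i t (st i t) + β i * max (st i t - st i (t - 1)) 0) ≤
        (1 + βmax / (e0 + C)) *
          ∑ t ∈ Finset.Icc 1 T, ∑ i,
            (f i t (s i t) + β i * max (s i t - s i (t - 1)) 0) := by
  intro s hs0 hs hsD
  have hN0 : (0 : ℝ) < N := by exact_mod_cast hN
  set δ := ε / N
  have hδ : 0 < δ := div_pos hε hN0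
  have hηM : log ((Dmax + δ) / δ) = η := by
    rw [hη]; congr 1; simp only [δ]; field_simp; ring
  obtain ⟨t₀, ht₀, hDt₀⟩ := hDmax.1
  have hDmax0 : 0 < Dmax := hDt₀ ▸ hD t₀ ht₀
  have hη0 : 0 < η := hηM ▸ log_pos ((one_lt_div hδ).2 (by linarith))
  have hst : ∀ i t, t ≤ T → st i t ∈ Set.Icc 0 Dmax :=
    mem_Icc_of_nonneg_of_sum_le hDmax0.le hst0 (fun t ht ↦ (honline t ht).1)
      fun t ht ↦ (heq t ht).trans_le (hDmax.2 ⟨t, ht, rfl⟩)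
  have hst' : ∀ i t, t ≤ T → 0 ≤ st i t := fun i t ht ↦ (hst i t ht).1
  have hDsum : 0 < ∑ t ∈ Icc 1 T, D t := sum_pos hD ⟨1, mem_Icc.2 ⟨le_rfl, hT⟩⟩
  have hfirst := sum_sum_add_sum_sum_log_ratio_mul_le_of_isMinOn hconv hβ hδ hη0.le hst'
    (fun t ht ↦ ⟨(honline t ht).1, (honline t ht).2.1⟩)
    (fun t ht ↦ isMinOn_iff.2 fun y hy ↦ (honline t ht).2.2 y hy.1 hy.2)
    (fun t ht ↦ ⟨fun i ↦ hs i t ht, hsD t ht⟩)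
  have hgrad := sum_sum_log_ratio_mul_le_sum_sum_mul_max hβ hδ hη0 hηM.le hst hs0
    fun i ↦ hs i T (mem_Icc.2 ⟨hT, le_rfl⟩)
  have hreg := sum_sum_log_ratio_mul_self_nonneg hβ hδ hη0.le hst0 hst'
  have hop := mul_sum_le_sum_sum_of_mul_le (fun i ↦ he0.2 ⟨i, rfl⟩) hflb
    (fun t ht ↦ (honline t ht).1) heq
  have hsw := sum_sum_mul_max_le hβ (fun i ↦ hβmax.2 ⟨i, rfl⟩) hst' heq
  obtain ⟨i₀, hi₀⟩ := he0.1
  obtain ⟨i₁, hi₁⟩ := hβmax.1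
  simp only [sum_add_distrib]
  refine add_le_one_add_div_mul (hi₀ ▸ he0i i₀) (hC ▸ div_nonneg hreg hDsum.le) (hi₁ ▸ hβ i₁)
    hDsum.le hop ?_ hsw
  rw [hC, div_mul_cancel₀ _ hDsum.ne']
  linarith

/-- Theorem 2: the online regularization algorithm (Algorithm 1) is
`(1 + β/(e₀ + C))`-competitive, where `C` is the accumulated regularization
term normalized by total demand, `β = max_i β_i` and `e₀ = min_i e_{0,i}`. -/
theorem regularization_competitive
    (N T : ℕ) (hN : 1 ≤ N) (hT : 1 ≤ T)
    (f : Fin N → ℕ → ℝ → ℝ)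
    (hconv : ∀ i t, ConvexOn ℝ Set.univ (f i t))
    (hmono : ∀ i t, Monotone (f i t))
    (hdiff : ∀ i t, ContDiff ℝ 1 (f i t))
    (e0i : Fin N → ℝ) (he0i : ∀ i, 0 < e0i i)
    (hflb : ∀ i t x, 0 ≤ x → e0i i * x ≤ f i t x)
    (β : Fin N → ℝ) (hβ : ∀ i, 0 ≤ β i)
    (D : ℕ → ℝ) (hD : ∀ t ∈ Finset.Icc 1 T, 0 < D t)
    (βmax : ℝ) (hβmax : IsGreatest (Set.range β) βmax)
    (e0 : ℝ) (he0 : IsLeast (Set.range e0i) e0)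
    (ε : ℝ) (hε : 0 < ε)
    (Dmax : ℝ) (hDmax : IsGreatest {x | ∃ t ∈ Finset.Icc 1 T, D t = x} Dmax)
    (η : ℝ) (hη : η = Real.log (1 + N * Dmax / ε))
    -- the online regularization schedule s̃
    (st : Fin N → ℕ → ℝ)
    (hst0 : ∀ i, st i 0 = 0)
    (honline : ∀ t ∈ Finset.Icc 1 T,
      (∀ i, 0 ≤ st i t) ∧ D t ≤ ∑ i, st i t ∧
      ∀ x : Fin N → ℝ, (∀ i, 0 ≤ x i) → D t ≤ ∑ i, x i →
        (∑ i, f i t (st i t)) +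
            (1 / η) * ∑ i, β i *
              ((st i t + ε / N) *
                  Real.log ((st i t + ε / N) / (st i (t - 1) + ε / N)) - st i t) ≤
          (∑ i, f i t (x i)) +
            (1 / η) * ∑ i, β i *
              ((x i + ε / N) *
                  Real.log ((x i + ε / N) / (st i (t - 1) + ε / N)) - x i))
    -- the online schedule meets demand with equality
    (heq : ∀ t ∈ Finset.Icc 1 T, ∑ i, st i t = D t)
    (C : ℝ)
    (hC : C = (∑ t ∈ Finset.Icc 1 T, ∑ i,
        (β i / η) * Real.log ((st i t + ε / N) / (st i (t - 1) + ε / N)) * st i t) /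
      (∑ t ∈ Finset.Icc 1 T, D t)) :
    -- for every feasible schedule s
    ∀ s : Fin N → ℕ → ℝ,
      (∀ i, s i 0 = 0) →
      (∀ i, ∀ t ∈ Finset.Icc 1 T, 0 ≤ s i t) →
      (∀ t ∈ Finset.Icc 1 T, D t ≤ ∑ i, s i t) →
      ∑ t ∈ Finset.Icc 1 T, ∑ i,
          (f i t (st i t) + β i * max (st i t - st i (t - 1)) 0) ≤
        (1 + βmax / (e0 + C)) *
          ∑ t ∈ Finset.Icc 1 T, ∑ i,
            (f i t (s i t) + β i * max (s i t - s i (t - 1)) 0) :=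
  regularization_competitive_general N T hN hT f hconv e0i he0i hflb β hβ D hD βmax hβmax e0 he0 ε
    hε Dmax hDmax η hη st hst0 honline heq C hC
end

section
/- Let N ≥ 1 and T ≥ 1 be integers, ε > 0, and for each i = 1,…,N let β_i ≥ 0 and let s_i(0), s_i(1), …, s_i(T) be real numbers with s_i(0) = 0 and s_i(t) ≥ 0 for all t. Then ∑_{t=1}^T ∑_{i=1}^N β_i·ln((s_i(t) + ε/N)/(s_i(t−1) + ε/N))·s_i(t) ≥ 0. -/
/-!
With `c = ε / N > 0` and the potential `F x = x - c log (x + c)`, the bound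
`log (1 + u) ≥ u / (1 + u)` gives `F b - F a ≤ log ((b + c) / (a + c)) * b` for `a, b ≥ 0`.
Summing over `t` telescopes, so each coordinate contributes at least `F (s T) - F 0`,
which is nonnegative since the same inequality with `b = 0` shows that `F` is minimal at `0`.
-/

open Real Finset

theorem Finset.sum_Icc_one_sub_pred_s2 {M : Type*} [AddCommGroup M] (f : ℕ → M) (n : ℕ) :
    ∑ t ∈ Icc 1 n, (f t - f (t - 1)) = f n - f 0 := by
  induction n with
  | zero => simp
  | succ n ih =>
    rw [sum_Icc_succ_top (by omega), ih, Nat.add_sub_cancel]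
    abel

lemma sub_mul_log_add_sub_le {a b c : ℝ} (ha : 0 ≤ a) (hb : 0 ≤ b) (hc : 0 < c) :
    (b - c * log (b + c)) - (a - c * log (a + c)) ≤ log ((b + c) / (a + c)) * b := by
  have hac : 0 < a + c := by linarith
  have hbc : 0 < b + c := by linarith
  have hratio : (b - a) / (b + c) ≤ log ((b + c) / (a + c)) := by
    convert one_sub_inv_le_log_of_pos (div_pos hbc hac) using 1
    field_simp
    ring
  rw [log_div hbc.ne' hac.ne'] at hratio ⊢
  have := (div_le_iff₀ hbc).mp hratio
  linarith

lemma neg_mul_log_le_sub_mul_log_add {x c : ℝ} (hx : 0 ≤ x) (hc : 0 < c) :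
    -(c * log c) ≤ x - c * log (x + c) := by
  simpa using sub_mul_log_add_sub_le hx le_rfl hc

lemma sum_log_div_mul_nonneg {c : ℝ} (hc : 0 < c) {x : ℕ → ℝ} (hx0 : x 0 = 0)
    (hx : ∀ t, 0 ≤ x t) (T : ℕ) :
    0 ≤ ∑ t ∈ Icc 1 T, log ((x t + c) / (x (t - 1) + c)) * x t := by
  set F : ℝ → ℝ := fun y ↦ y - c * log (y + c)
  calc 0 ≤ F (x T) - F (x 0) := by
        simp only [F, hx0, zero_add, zero_sub]
        linarith [neg_mul_log_le_sub_mul_log_add (hx T) hc]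
    _ = ∑ t ∈ Icc 1 T, (F (x t) - F (x (t - 1))) := (sum_Icc_one_sub_pred_s2 (F ∘ x) T).symm
    _ ≤ _ := sum_le_sum fun t _ ↦ sub_mul_log_add_sub_le (hx (t - 1)) (hx t) hc

theorem regularization_term_nonneg_general
    (N T : ℕ) (hN : 1 ≤ N)
    (ε : ℝ) (hε : 0 < ε)
    (β : Fin N → ℝ) (hβ : ∀ i, 0 ≤ β i)
    (s : Fin N → ℕ → ℝ)
    (hs0 : ∀ i, s i 0 = 0)
    (hs : ∀ i t, 0 ≤ s i t) :
    0 ≤ ∑ t ∈ Finset.Icc 1 T, ∑ i,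
        β i * Real.log ((s i t + ε / N) / (s i (t - 1) + ε / N)) * s i t := by
  have hc : 0 < ε / N := div_pos hε (by exact_mod_cast hN)
  rw [sum_comm]
  refine sum_nonneg fun i _ ↦ ?_
  simp_rw [mul_assoc, ← mul_sum]
  exact mul_nonneg (hβ i) (sum_log_div_mul_nonneg hc (hs0 i) (hs i) T)

/-- The accumulated regularization term is nonnegative (`C ≥ 0`). -/
theorem regularization_term_nonneg
    (N T : ℕ) (hN : 1 ≤ N) (hT : 1 ≤ T)
    (ε : ℝ) (hε : 0 < ε)
    (β : Fin N → ℝ) (hβ : ∀ i, 0 ≤ β i)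
    (s : Fin N → ℕ → ℝ)
    (hs0 : ∀ i, s i 0 = 0)
    (hs : ∀ i t, 0 ≤ s i t) :
    0 ≤ ∑ t ∈ Finset.Icc 1 T, ∑ i,
        β i * Real.log ((s i t + ε / N) / (s i (t - 1) + ε / N)) * s i t :=
  regularization_term_nonneg_general N T hN ε hε β hβ s hs0 hs
end

section
/- Let N ≥ 1 and T ≥ 1 be integers, ε > 0, D_max > 0, and η = ln(1 + N·D_max/ε). For each i = 1,…,N let β_i ≥ 0, and let s_i(0), …, s_i(T) be real numbers with s_i(0) = 0 and 0 ≤ s_i(t) ≤ D_max for all t. Let D(t) ≥ 0 satisfy ∑_{i=1}^N s_i(t) = D(t) for all t = 1,…,T and ∑_{t=1}^T D(t) > 0. Then C := (∑_{t=1}^T ∑_{i=1}^N (β_i/η)·ln((s_i(t)+ε/N)/(s_i(t−1)+ε/N))·s_i(t)) / (∑_{t=1}^T D(t)) satisfies C ≤ β, where β = max_i β_i. -/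
/-- The normalized accumulated regularization term satisfies `C ≤ β`,
where `β = max_i β_i` and `η = ln(1 + N·D_max/ε)`. -/
theorem regularization_term_le_beta
    (N T : ℕ) (hN : 1 ≤ N) (hT : 1 ≤ T)
    (ε : ℝ) (hε : 0 < ε)
    (Dmax : ℝ) (hDmax : 0 < Dmax)
    (η : ℝ) (hη : η = Real.log (1 + N * Dmax / ε))
    (β : Fin N → ℝ) (hβ : ∀ i, 0 ≤ β i)
    (βmax : ℝ) (hβmax : IsGreatest (Set.range β) βmax)
    (s : Fin N → ℕ → ℝ)
    (hs0 : ∀ i, s i 0 = 0)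
    (hs_nonneg : ∀ i t, 0 ≤ s i t)
    (hs_le : ∀ i t, s i t ≤ Dmax)
    (D : ℕ → ℝ) (hD : ∀ t, 0 ≤ D t)
    (hsum : ∀ t ∈ Finset.Icc 1 T, ∑ i, s i t = D t)
    (hDpos : 0 < ∑ t ∈ Finset.Icc 1 T, D t) :
    (∑ t ∈ Finset.Icc 1 T, ∑ i,
        (β i / η) * Real.log ((s i t + ε / N) / (s i (t - 1) + ε / N)) * s i t) /
      (∑ t ∈ Finset.Icc 1 T, D t) ≤ βmax := by
  have hNpos : (0:ℝ) < N := by exact_mod_cast hN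
  have hc : (0:ℝ) < ε / N := div_pos hε hNpos
  have hηpos : 0 < η := by
    rw [hη]
    apply Real.log_pos
    have : 0 < (N:ℝ) * Dmax / ε := div_pos (mul_pos hNpos hDmax) hε
    linarith
  rw [div_le_iff₀ hDpos]
  calc ∑ t ∈ Finset.Icc 1 T, ∑ i,
        (β i / η) * Real.log ((s i t + ε / N) / (s i (t - 1) + ε / N)) * s i t
      ≤ ∑ t ∈ Finset.Icc 1 T, βmax * D t := by
        apply Finset.sum_le_sum
        intro t ht
        rw [← hsum t ht, Finset.mul_sum]
        apply Finset.sum_le_sum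
        intro i _
        have hlog : Real.log ((s i t + ε / N) / (s i (t - 1) + ε / N)) ≤ η := by
          rw [hη]
          apply Real.log_le_log
          · exact div_pos (by linarith [hs_nonneg i t]) (by linarith [hs_nonneg i (t-1)])
          · rw [div_le_iff₀ (by linarith [hs_nonneg i (t-1)])]
            have h1 : s i t + ε / N ≤ Dmax + ε / N := by linarith [hs_le i t]
            have h2 : (1 + N * Dmax / ε) * (ε / N) = Dmax + ε / N := by
              field_simp; ring
            calc s i t + ε / N ≤ Dmax + ε / N := h1
              _ = (1 + N * Dmax / ε) * (ε / N) := h2.symm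
              _ ≤ (1 + N * Dmax / ε) * (s i (t-1) + ε / N) := by
                  apply mul_le_mul_of_nonneg_left (by linarith [hs_nonneg i (t-1)])
                  have : 0 < (N:ℝ) * Dmax / ε := div_pos (mul_pos hNpos hDmax) hε
                  linarith
        have hβi : β i ≤ βmax := hβmax.2 ⟨i, rfl⟩
        calc (β i / η) * Real.log ((s i t + ε / N) / (s i (t - 1) + ε / N)) * s i t
            ≤ (β i / η) * η * s i t := by
              apply mul_le_mul_of_nonneg_right _ (hs_nonneg i t)
              exact mul_le_mul_of_nonneg_left hlog (div_nonneg (hβ i) hηpos.le)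
          _ = β i * s i t := by field_simp
          _ ≤ βmax * s i t := mul_le_mul_of_nonneg_right hβi (hs_nonneg i t)
    _ = βmax * ∑ t ∈ Finset.Icc 1 T, D t := by rw [Finset.mul_sum]
end

section
/- Suppose either (∑_{i=1}^N β_i)·(max_{i,t} r_i(t)) ≥ (min_{i,t} c_i(t))·D_min, or K_s is well defined and K_s > K_c. Set ε = D_min and η = K_c·ln(1 + N·D_max/ε). Let s̃ be the online schedule: s̃_i(0) = 0 and, for each t = 1,…,T, the vector (s̃_i(t))_{i=1}^N minimizes ∑_{i=1}^N c_i(t)·x_i + (1/η)·∑_{i=1}^N β_i[(z_i + ε/N)·ln((z_i + ε/N)/(s̃_i(t−1) + ε/N)) − z_i], where z_i = max(x_i − r_i(t), s̃_i(t−1)), over {x : x_i ≥ 0 for all i, ∑_i x_i ≥ D(t)}, and assume the online schedule meets demand with equality, ∑_{i=1}^N s̃_i(t) = D(t) for every t. Then for every feasible schedule s, the total cost of s̃ is at most K_c·(1 + 2·ln(1 + N·D_max/D_min)) times the total cost of s. -/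
set_option maxHeartbeats 2000000

lemma regul_diff_bound (a b x r e' L : ℝ) (ha : 0 ≤ a) (hx : 0 ≤ x) (hrr : 0 ≤ r)
    (he' : 0 < e') (hL : 0 < L)
    (hlog : Real.log ((x + e') / e') ≤ L) :
    ((max (x - r) a + e') * Real.log ((max (x - r) a + e') / (a + e')) - max (x - r) a)
      - ((max (b - r) a + e') * Real.log ((max (b - r) a + e') / (a + e')) - max (b - r) a)
      ≤ L * (x + e') + max (b - a - r) 0 := by
  have hae : 0 < a + e' := by linarith
  have hzb : a ≤ max (b - r) a := le_max_right _ _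
  have hKLb : 0 ≤ (max (b - r) a + e') * Real.log ((max (b - r) a + e') / (a + e')) :=
    mul_nonneg (by linarith) (Real.log_nonneg ((one_le_div hae).2 (by linarith)))
  have hzdiff : max (b - r) a - max (x - r) a ≤ max (b - a - r) 0 := by
    have h1 : b - r ≤ a + max (b - a - r) 0 := by
      have := le_max_left (b - a - r) (0 : ℝ); linarith
    have h2 : a ≤ a + max (b - a - r) 0 := by
      have := le_max_right (b - a - r) (0 : ℝ); linarith
    have h3 : max (b - r) a ≤ a + max (b - a - r) 0 := max_le h1 h2
    have h4 : a ≤ max (x - r) a := le_max_right _ _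
    linarith
  have hKLx : (max (x - r) a + e') * Real.log ((max (x - r) a + e') / (a + e')) ≤ L * (x + e') := by
    rcases le_or_gt (x - r) a with h | h
    · rw [max_eq_right h, div_self (ne_of_gt hae), Real.log_one, mul_zero]
      exact mul_nonneg hL.le (by linarith)
    · rw [max_eq_left h.le]
      have hx1 : 0 < x - r + e' := by linarith
      have hxe : 0 < x + e' := by linarith
      have hlog2 : Real.log ((x - r + e') / (a + e')) ≤ Real.log ((x + e') / e') := by
        apply Real.log_le_log (by positivity)
        exact div_le_div₀ (le_of_lt hxe) (by linarith) he' (by linarith)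
      have hlognn : 0 ≤ Real.log ((x - r + e') / (a + e')) :=
        Real.log_nonneg ((one_le_div hae).2 (by linarith))
      calc (x - r + e') * Real.log ((x - r + e') / (a + e'))
          ≤ (x + e') * Real.log ((x - r + e') / (a + e')) :=
            mul_le_mul_of_nonneg_right (by linarith) hlognn
        _ ≤ (x + e') * Real.log ((x + e') / e') :=
            mul_le_mul_of_nonneg_left hlog2 (le_of_lt hxe)
        _ ≤ (x + e') * L := mul_le_mul_of_nonneg_left hlog (le_of_lt hxe)
        _ = L * (x + e') := mul_comm _ _
  linarith

/-- Theorem 3, case `K_s > K_c` or `K_s < 1` (i.e. `K_s` not well defined):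
the online regularization algorithm with switching cost offset, using the
offset-shifted regularizer, achieves competitive ratio
`K_c·(1 + 2·ln(1 + N·D_max/D_min))`. -/
theorem regularization_offset_competitive_case2
    (N T : ℕ) (hN : 1 ≤ N) (hT : 1 ≤ T)
    (c : Fin N → ℕ → ℝ) (hc : ∀ i, ∀ t ∈ Finset.Icc 1 T, 0 < c i t)
    (β : Fin N → ℝ) (hβ : ∀ i, 0 ≤ β i)
    (r : Fin N → ℕ → ℝ) (hr : ∀ i, ∀ t ∈ Finset.Icc 1 T, 0 < r i t)
    (D : ℕ → ℝ)
    (Dmin : ℝ) (hDmin : IsLeast {x | ∃ t ∈ Finset.Icc 1 T, D t = x} Dmin)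
    (hDminpos : 0 < Dmin)
    (Dmax : ℝ) (hDmax : IsGreatest {x | ∃ t ∈ Finset.Icc 1 T, D t = x} Dmax)
    (βmax : ℝ) (hβmax : IsGreatest (Set.range β) βmax)
    (cmin : ℝ) (hcmin : IsLeast {x | ∃ i : Fin N, ∃ t ∈ Finset.Icc 1 T, c i t = x} cmin)
    (rmin : ℝ) (hrmin : IsLeast {x | ∃ i : Fin N, ∃ t ∈ Finset.Icc 1 T, r i t = x} rmin)
    (rmax : ℝ) (hrmax : IsGreatest {x | ∃ i : Fin N, ∃ t ∈ Finset.Icc 1 T, r i t = x} rmax)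
    (ε : ℝ) (hε : ε = Dmin)
    (Kc : ℝ) (hKc : Kc = max (2 * (1 + ε / Dmin) * Dmax * βmax / (rmin * cmin)) 1)
    (Ks : ℝ) (hKs : Ks = 1 / (1 - (∑ i, β i) * rmax / (cmin * Dmin)))
    -- case 2: K_s is not well defined, or K_s > K_c
    (hcase : cmin * Dmin ≤ (∑ i, β i) * rmax ∨
      ((∑ i, β i) * rmax < cmin * Dmin ∧ Kc < Ks))
    (η : ℝ) (hη : η = Kc * Real.log (1 + N * Dmax / ε))
    -- the online schedule s̃
    (st : Fin N → ℕ → ℝ)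
    (hst0 : ∀ i, st i 0 = 0)
    (honline : ∀ t ∈ Finset.Icc 1 T,
      (∀ i, 0 ≤ st i t) ∧ D t ≤ ∑ i, st i t ∧
      ∀ x : Fin N → ℝ, (∀ i, 0 ≤ x i) → D t ≤ ∑ i, x i →
        (∑ i, c i t * st i t) +
            (1 / η) * ∑ i, β i *
              ((max (st i t - r i t) (st i (t - 1)) + ε / N) *
                  Real.log ((max (st i t - r i t) (st i (t - 1)) + ε / N) /
                    (st i (t - 1) + ε / N)) -
                max (st i t - r i t) (st i (t - 1))) ≤
          (∑ i, c i t * x i) +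
            (1 / η) * ∑ i, β i *
              ((max (x i - r i t) (st i (t - 1)) + ε / N) *
                  Real.log ((max (x i - r i t) (st i (t - 1)) + ε / N) /
                    (st i (t - 1) + ε / N)) -
                max (x i - r i t) (st i (t - 1))))
    -- the online schedule meets demand with equality
    (heq : ∀ t ∈ Finset.Icc 1 T, ∑ i, st i t = D t) :
    -- for every feasible schedule s
    ∀ s : Fin N → ℕ → ℝ,
      (∀ i, s i 0 = 0) →
      (∀ i, ∀ t ∈ Finset.Icc 1 T, 0 ≤ s i t) →
      (∀ t ∈ Finset.Icc 1 T, D t ≤ ∑ i, s i t) →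
      ∑ t ∈ Finset.Icc 1 T, ∑ i,
          (c i t * st i t + β i * max (st i t - st i (t - 1) - r i t) 0) ≤
        Kc * (1 + 2 * Real.log (1 + N * Dmax / Dmin)) *
          ∑ t ∈ Finset.Icc 1 T, ∑ i,
            (c i t * s i t + β i * max (s i t - s i (t - 1) - r i t) 0) := by
  intro s hs0 hsnn hsfeas
  rw [hε] at hη
  rw [hε] at hKc
  rw [hε] at honline
  set L : ℝ := Real.log (1 + N * Dmax / Dmin) with hLdef
  -- basic positivity facts
  have hNpos : (0 : ℝ) < N := by exact_mod_cast Nat.lt_of_lt_of_le Nat.zero_lt_one hN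
  have hN1 : (1 : ℝ) ≤ N := by exact_mod_cast hN
  have hcminpos : 0 < cmin := by
    obtain ⟨i0, t0, ht0, hct0⟩ := hcmin.1
    exact hct0 ▸ hc i0 t0 ht0
  have hrminpos : 0 < rmin := by
    obtain ⟨i0, t0, ht0, hrt0⟩ := hrmin.1
    exact hrt0 ▸ hr i0 t0 ht0
  have hβmax0 : 0 ≤ βmax := by
    obtain ⟨i0, hi0⟩ := hβmax.1
    exact hi0 ▸ hβ i0
  have hβle : ∀ i, β i ≤ βmax := fun i => hβmax.2 ⟨i, rfl⟩
  have hDmm : Dmin ≤ Dmax := by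
    obtain ⟨t0, ht0, hd0⟩ := hDmax.1
    exact hd0 ▸ hDmin.2 ⟨t0, ht0, rfl⟩
  have hDmaxpos : 0 < Dmax := lt_of_lt_of_le hDminpos hDmm
  have hKc1 : 1 ≤ Kc := by rw [hKc]; exact le_max_right _ _
  have hKc0 : 0 ≤ Kc := by linarith
  have hKcpos : 0 < Kc := by linarith
  have hKc_ge : 4 * Dmax * βmax / (rmin * cmin) ≤ Kc := by
    have h4 : 2 * (1 + Dmin / Dmin) = 4 := by
      rw [div_self (ne_of_gt hDminpos)]; norm_num
    have h5 : 4 * Dmax * βmax / (rmin * cmin)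
        = 2 * (1 + Dmin / Dmin) * Dmax * βmax / (rmin * cmin) := by rw [h4]
    rw [h5, hKc]
    exact le_max_left _ _
  have hL2 : Real.log 2 ≤ L := by
    rw [hLdef]
    apply Real.log_le_log (by norm_num)
    have h1 : (1 : ℝ) ≤ ↑N * Dmax / Dmin := by
      apply (one_le_div hDminpos).2
      nlinarith
    linarith
  have hLpos : 0 < L := lt_of_lt_of_le (Real.log_pos (by norm_num)) hL2
  have hLnum : (0.6931471803 : ℝ) ≤ L := le_trans Real.log_two_gt_d9.le hL2
  have hηL : η = Kc * L := hη
  have hηpos : 0 < η := by rw [hηL]; positivity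
  have hη0 : (0 : ℝ) ≤ 1 / η := by positivity
  -- the per-step bound
  have hstep : ∀ t ∈ Finset.Icc 1 T,
      (∑ i, (c i t * st i t + β i * max (st i t - st i (t - 1) - r i t) 0)) ≤
        (3 / 2 + Kc / 4 + 1 / (4 * L)) * ∑ i, c i t * s i t := by
    intro t ht
    obtain ⟨ht1, ht2⟩ := Finset.mem_Icc.mp ht
    obtain ⟨hb_nn, -, hmin⟩ := honline t ht
    have ha_nn : ∀ i, 0 ≤ st i (t - 1) := by
      intro i
      by_cases h : t = 1
      · simp [h, hst0]
      · exact (honline (t - 1) (Finset.mem_Icc.mpr ⟨by omega, by omega⟩)).1 i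
    have hDt1 : Dmin ≤ D t := hDmin.2 ⟨t, ht, rfl⟩
    have hDt2 : D t ≤ Dmax := hDmax.2 ⟨t, ht, rfl⟩
    have hDtpos : 0 < D t := lt_of_lt_of_le hDminpos hDt1
    have hS : D t ≤ ∑ j, s j t := hsfeas t ht
    have hSpos : 0 < ∑ j, s j t := lt_of_lt_of_le hDtpos hS
    set x : Fin N → ℝ := fun i => s i t * (D t / (∑ j, s j t)) with hxdef
    have hx_nn : ∀ i, 0 ≤ x i := fun i =>
      mul_nonneg (hsnn i t ht) (div_nonneg hDtpos.le hSpos.le)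
    have hx_sum : ∑ i, x i = D t := by
      simp only [hxdef]
      rw [← Finset.sum_mul, mul_comm, div_mul_cancel₀ _ (ne_of_gt hSpos)]
    have hx_le_s : ∀ i, x i ≤ s i t := by
      intro i
      have hd1 : D t / (∑ j, s j t) ≤ 1 := (div_le_one hSpos).2 hS
      calc x i = s i t * (D t / (∑ j, s j t)) := rfl
        _ ≤ s i t * 1 := mul_le_mul_of_nonneg_left hd1 (hsnn i t ht)
        _ = s i t := mul_one _
    have hCx : (∑ i, c i t * x i) ≤ ∑ i, c i t * s i t :=
      Finset.sum_le_sum fun i _ => mul_le_mul_of_nonneg_left (hx_le_s i) (hc i t ht).le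
    have hsum_st : ∑ i, st i t = D t := heq t ht
    have hb_le_D : ∀ i, st i t ≤ D t := by
      intro i
      have h1 := Finset.single_le_sum (f := fun j => st j t) (fun j _ => hb_nn j)
        (Finset.mem_univ i)
      rwa [hsum_st] at h1
    have hx_le_D : ∀ i, x i ≤ D t := by
      intro i
      have h1 := Finset.single_le_sum (f := fun j => x j) (fun j _ => hx_nn j)
        (Finset.mem_univ i)
      rwa [hx_sum] at h1
    have key := hmin x hx_nn hx_sum.ge
    have hCs_nn : 0 ≤ ∑ i, c i t * s i t :=
      Finset.sum_nonneg fun i _ => mul_nonneg (hc i t ht).le (hsnn i t ht)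
    have hCsD : cmin * D t ≤ ∑ i, c i t * s i t := by
      calc cmin * D t ≤ cmin * ∑ j, s j t := mul_le_mul_of_nonneg_left hS hcminpos.le
        _ = ∑ j, cmin * s j t := Finset.mul_sum _ _ _
        _ ≤ ∑ i, c i t * s i t := Finset.sum_le_sum fun i _ =>
            mul_le_mul_of_nonneg_right (hcmin.2 ⟨i, t, ht, rfl⟩) (hsnn i t ht)
    rw [Finset.sum_add_distrib]
    by_cases hRD : Dmax ≤ rmin
    · -- degenerate case : no switching at all
      have hmaxb : ∀ i, max (st i t - r i t) (st i (t - 1)) = st i (t - 1) := fun i =>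
        max_eq_right (by
          have h1 := hrmin.2 ⟨i, t, ht, rfl⟩
          have h2 := hb_le_D i
          have h3 := ha_nn i
          linarith)
      have hmaxx : ∀ i, max (x i - r i t) (st i (t - 1)) = st i (t - 1) := fun i =>
        max_eq_right (by
          have h1 := hrmin.2 ⟨i, t, ht, rfl⟩
          have h2 := hx_le_D i
          have h3 := ha_nn i
          linarith)
      have hsw0 : ∀ i, max (st i t - st i (t - 1) - r i t) 0 = 0 := fun i =>
        max_eq_right (by
          have h1 := hrmin.2 ⟨i, t, ht, rfl⟩
          have h2 := hb_le_D i
          have h3 := ha_nn i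
          linarith)
      have hPQ : (∑ i, β i *
              ((max (st i t - r i t) (st i (t - 1)) + Dmin / N) *
                  Real.log ((max (st i t - r i t) (st i (t - 1)) + Dmin / N) /
                    (st i (t - 1) + Dmin / N)) -
                max (st i t - r i t) (st i (t - 1))))
          = ∑ i, β i *
              ((max (x i - r i t) (st i (t - 1)) + Dmin / N) *
                  Real.log ((max (x i - r i t) (st i (t - 1)) + Dmin / N) /
                    (st i (t - 1) + Dmin / N)) -
                max (x i - r i t) (st i (t - 1))) :=
        Finset.sum_congr rfl fun i _ => by rw [hmaxb i, hmaxx i]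
      rw [hPQ] at key
      have hA : (∑ i, c i t * st i t) ≤ ∑ i, c i t * x i := le_of_add_le_add_right key
      have hSW0 : (∑ i, β i * max (st i t - st i (t - 1) - r i t) 0) = 0 :=
        Finset.sum_eq_zero fun i _ => by rw [hsw0 i, mul_zero]
      rw [hSW0]
      have hκ1 : 1 ≤ 3 / 2 + Kc / 4 + 1 / (4 * L) := by
        have h4L : 0 < 1 / (4 * L) := by positivity
        linarith
      have hfin : (∑ i, c i t * s i t) ≤ (3 / 2 + Kc / 4 + 1 / (4 * L)) * ∑ i, c i t * s i t :=
        le_mul_of_one_le_left hCs_nn hκ1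
      linarith [le_trans hA hCx]
    · -- main case
      push_neg at hRD
      have he' : 0 < Dmin / (N : ℝ) := div_pos hDminpos hNpos
      have hKcmul : 4 * Dmax * βmax ≤ Kc * (rmin * cmin) := by
        have hrc : 0 < rmin * cmin := mul_pos hrminpos hcminpos
        exact (div_le_iff₀ hrc).1 hKc_ge
      have hKc4 : 4 * βmax ≤ Kc * cmin := by
        nlinarith [mul_nonneg (mul_nonneg hKc0 hcminpos.le) (sub_nonneg.2 hRD.le), hDmaxpos]
      have hlog_i : ∀ i, Real.log ((x i + Dmin / N) / (Dmin / N)) ≤ L := by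
        intro i
        have harg1 : 0 < (x i + Dmin / N) / (Dmin / N) :=
          div_pos (by linarith [hx_nn i]) he'
        have harg2 : (x i + Dmin / N) / (Dmin / N) ≤ 1 + ↑N * Dmax / Dmin := by
          rw [add_div, div_self (ne_of_gt he'), div_div_eq_mul_div]
          have hxiD : x i ≤ Dmax := le_trans (hx_le_D i) hDt2
          have h1 : x i * ↑N ≤ ↑N * Dmax := by
            rw [mul_comm]
            exact mul_le_mul_of_nonneg_left hxiD hNpos.le
          have h2 : x i * ↑N / Dmin ≤ ↑N * Dmax / Dmin :=
            div_le_div₀ (by positivity) h1 hDminpos le_rfl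
          linarith
        exact le_of_le_of_eq (Real.log_le_log harg1 harg2) hLdef.symm
      have hQP : (∑ i, β i *
              ((max (x i - r i t) (st i (t - 1)) + Dmin / N) *
                  Real.log ((max (x i - r i t) (st i (t - 1)) + Dmin / N) /
                    (st i (t - 1) + Dmin / N)) -
                max (x i - r i t) (st i (t - 1))))
          - (∑ i, β i *
              ((max (st i t - r i t) (st i (t - 1)) + Dmin / N) *
                  Real.log ((max (st i t - r i t) (st i (t - 1)) + Dmin / N) /
                    (st i (t - 1) + Dmin / N)) -
                max (st i t - r i t) (st i (t - 1))))
          ≤ (∑ i, β i * (L * (x i + Dmin / N)))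
            + ∑ i, β i * max (st i t - st i (t - 1) - r i t) 0 := by
        rw [← Finset.sum_sub_distrib, ← Finset.sum_add_distrib]
        refine Finset.sum_le_sum fun i _ => ?_
        have h := regul_diff_bound (st i (t - 1)) (st i t) (x i) (r i t) (Dmin / N) L
          (ha_nn i) (hx_nn i) (hr i t ht).le he' hLpos (hlog_i i)
        have h2 := mul_le_mul_of_nonneg_left h (hβ i)
        linarith [h2]
      have hηQP := mul_le_mul_of_nonneg_left hQP hη0
      have hND : (N : ℝ) * (Dmin / N) = Dmin := by field_simp
      have hLB : (∑ i, β i * (L * (x i + Dmin / N))) ≤ βmax * (L * (D t + Dmin)) := by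
        calc (∑ i, β i * (L * (x i + Dmin / N)))
            ≤ ∑ i, βmax * (L * (x i + Dmin / N)) :=
              Finset.sum_le_sum fun i _ => mul_le_mul_of_nonneg_right (hβle i)
                (mul_nonneg hLpos.le (by linarith [hx_nn i]))
          _ = βmax * (L * ((∑ i, x i) + ↑N * (Dmin / N))) := by
              rw [← Finset.mul_sum, ← Finset.mul_sum, Finset.sum_add_distrib,
                Finset.sum_const, Finset.card_univ, Fintype.card_fin, nsmul_eq_mul]
          _ = βmax * (L * (D t + Dmin)) := by rw [hx_sum, hND]
      have h2' : 1 / η * (βmax * (L * (D t + Dmin))) ≤ (∑ i, c i t * s i t) / 2 := by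
        rw [hηL, one_div_mul_eq_div, div_le_iff₀ (mul_pos hKcpos hLpos)]
        nlinarith [mul_le_mul_of_nonneg_left hCsD (mul_nonneg hLpos.le hKc0),
          mul_le_mul_of_nonneg_right hKc4 (mul_nonneg hLpos.le hDtpos.le),
          mul_nonneg (mul_nonneg hβmax0 hLpos.le) (sub_nonneg.2 hDt1)]
      have hηLB : 1 / η * (∑ i, β i * (L * (x i + Dmin / N))) ≤ (∑ i, c i t * s i t) / 2 :=
        le_trans (mul_le_mul_of_nonneg_left hLB hη0) h2'
      have hSWb : (∑ i, β i * max (st i t - st i (t - 1) - r i t) 0)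
          ≤ Kc / 4 * ∑ i, c i t * s i t := by
        have h1 : (∑ i, β i * max (st i t - st i (t - 1) - r i t) 0) ≤ βmax * D t := by
          calc (∑ i, β i * max (st i t - st i (t - 1) - r i t) 0)
              ≤ ∑ i, βmax * st i t := by
                refine Finset.sum_le_sum fun i _ => ?_
                have hm0 : (0 : ℝ) ≤ max (st i t - st i (t - 1) - r i t) 0 := le_max_right _ _
                have hmb : max (st i t - st i (t - 1) - r i t) 0 ≤ st i t := by
                  have h3 := ha_nn i; have h4 := hr i t ht; have h5 := hb_nn i
                  exact max_le (by linarith) (by linarith)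
                calc β i * max (st i t - st i (t - 1) - r i t) 0
                    ≤ βmax * max (st i t - st i (t - 1) - r i t) 0 :=
                      mul_le_mul_of_nonneg_right (hβle i) hm0
                  _ ≤ βmax * st i t := mul_le_mul_of_nonneg_left hmb hβmax0
            _ = βmax * D t := by rw [← Finset.mul_sum, hsum_st]
        have h2 : βmax * D t ≤ Kc / 4 * ∑ i, c i t * s i t := by
          nlinarith [mul_le_mul_of_nonneg_right hKc4 hDtpos.le,
            mul_le_mul_of_nonneg_left hCsD (by linarith : (0 : ℝ) ≤ Kc / 4)]
        exact le_trans h1 h2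
      have hηSW : 1 / η * (∑ i, β i * max (st i t - st i (t - 1) - r i t) 0)
          ≤ 1 / (4 * L) * ∑ i, c i t * s i t := by
        have h1 := mul_le_mul_of_nonneg_left hSWb hη0
        have h2 : 1 / η * (Kc / 4 * ∑ i, c i t * s i t)
            = 1 / (4 * L) * ∑ i, c i t * s i t := by
          rw [hηL]
          field_simp
        linarith [h1]
      linarith [key, hηQP, hCx, hηLB, hηSW, hSWb]
  -- assemble
  have hκ : 3 / 2 + Kc / 4 + 1 / (4 * L) ≤ Kc * (1 + 2 * L) := by
    have hinv : 1 / (4 * L) * (4 * L) = 1 := by field_simp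
    nlinarith [mul_nonneg (show (0 : ℝ) ≤ 1 / (4 * L) by positivity)
        (sub_nonneg.2 hLnum),
      mul_nonneg (sub_nonneg.2 hKc1) hLpos.le, hinv, hLpos, hLnum]
  have hOffSv_nn : 0 ≤ ∑ t ∈ Finset.Icc 1 T, ∑ i, c i t * s i t :=
    Finset.sum_nonneg fun t ht => Finset.sum_nonneg fun i _ =>
      mul_nonneg (hc i t ht).le (hsnn i t ht)
  have hOffle : (∑ t ∈ Finset.Icc 1 T, ∑ i, c i t * s i t)
      ≤ ∑ t ∈ Finset.Icc 1 T, ∑ i,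
          (c i t * s i t + β i * max (s i t - s i (t - 1) - r i t) 0) :=
    Finset.sum_le_sum fun t _ => Finset.sum_le_sum fun i _ =>
      le_add_of_nonneg_right (mul_nonneg (hβ i) (le_max_right _ _))
  have hratio0 : 0 ≤ Kc * (1 + 2 * L) := mul_nonneg hKc0 (by linarith)
  calc ∑ t ∈ Finset.Icc 1 T, ∑ i,
        (c i t * st i t + β i * max (st i t - st i (t - 1) - r i t) 0)
      ≤ ∑ t ∈ Finset.Icc 1 T, (3 / 2 + Kc / 4 + 1 / (4 * L)) * ∑ i, c i t * s i t :=
        Finset.sum_le_sum hstep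
    _ = (3 / 2 + Kc / 4 + 1 / (4 * L)) * ∑ t ∈ Finset.Icc 1 T, ∑ i, c i t * s i t :=
        (Finset.mul_sum _ _ _).symm
    _ ≤ Kc * (1 + 2 * L) * ∑ t ∈ Finset.Icc 1 T, ∑ i, c i t * s i t :=
        mul_le_mul_of_nonneg_right hκ hOffSv_nn
    _ ≤ Kc * (1 + 2 * L) * ∑ t ∈ Finset.Icc 1 T, ∑ i,
          (c i t * s i t + β i * max (s i t - s i (t - 1) - r i t) 0) :=
        mul_le_mul_of_nonneg_left hOffle hratio0
end

section
/- Let N ≥ 1, T ≥ 1, ε > 0, D_max > 0, η = ln(1 + N·D_max/ε), and β_i ≥ 0 for i = 1,…,N. For each i and t let f_{i,t} : ℝ → ℝ be convex and differentiable. Let s̃_i(t) (t = 0,…,T) satisfy s̃_i(0) = 0 and s̃_i(t) ≥ 0, and let D(t) satisfy ∑_{i=1}^N s̃_i(t) = D(t) and 0 < D(t) ≤ D_max for all t = 1,…,T. Suppose there exist λ_t ≥ 0 and l_{i,t} ≥ 0 with s̃_i(t)·l_{i,t} = 0 and the stationarity condition (β_i/η)·ln((s̃_i(t)+ε/N)/(s̃_i(t−1)+ε/N))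 = λ_t − f'_{i,t}(s̃_i(t)) + l_{i,t} for all i and t. Then every feasible schedule s satisfies ∑_{t=1}^T ∑_{i=1}^N [f_{i,t}(s_i(t)) + β_i·max(s_i(t) − s_i(t−1), 0)] ≥ ∑_{t=1}^T ∑_{i=1}^N [f_{i,t}(s̃_i(t)) + (β_i/η)·ln((s̃_i(t)+ε/N)/(s̃_i(t−1)+ε/N))·s̃_i(t)]. -/
/-- Tangent line inequality for convex differentiable functions on ℝ. -/
lemma tangent_le_conv (f : ℝ → ℝ) (hc : ConvexOn ℝ Set.univ f)
    (hd : Differentiable ℝ f) (x y : ℝ) :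
    f x + deriv f x * (y - x) ≤ f y := by
  rcases lt_trichotomy x y with h | h | h
  · have h1 := hc.deriv_le_slope (Set.mem_univ x) (Set.mem_univ y) h (hd x)
    rw [slope_def_field, le_div_iff₀ (by linarith)] at h1
    linarith
  · subst h; simp
  · have h1 := hc.slope_le_deriv (Set.mem_univ y) (Set.mem_univ x) h (hd x)
    rw [slope_def_field, div_le_iff₀ (by linarith)] at h1
    nlinarith

lemma sum_Icc_telescope (F : ℕ → ℝ) (T : ℕ) :
    ∑ t ∈ Finset.Icc 1 T, (F t - F (t - 1)) = F T - F 0 := by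
  induction T with
  | zero => simp
  | succ n ih =>
    rw [Finset.sum_Icc_succ_top (by omega)]
    simp only [Nat.add_sub_cancel, ih]
    ring

/-- Telescoping bound: the "potential-weighted" sum is controlled by the total increase. -/
lemma tele_bound (T : ℕ) (η : ℝ) (ψ s : ℕ → ℝ) (hs0 : s 0 = 0)
    (hψnn : ∀ t ≤ T, 0 ≤ ψ t) (hψle : ∀ t ≤ T, ψ t ≤ η) (hsT : 0 ≤ s T) :
    ∑ t ∈ Finset.Icc 1 T, (ψ t - ψ (t - 1)) * s t ≤
      η * ∑ t ∈ Finset.Icc 1 T, max (s t - s (t - 1)) 0 := by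
  have key : ∑ t ∈ Finset.Icc 1 T, (ψ t - ψ (t - 1)) * s t =
      (ψ T * s T - ψ 0 * s 0) -
        ∑ t ∈ Finset.Icc 1 T, ψ (t - 1) * (s t - s (t - 1)) := by
    rw [← sum_Icc_telescope (fun t => ψ t * s t) T, ← Finset.sum_sub_distrib]
    exact Finset.sum_congr rfl fun t _ => by ring
  have hterm : ∀ t ∈ Finset.Icc 1 T,
      -(ψ (t - 1) * (s t - s (t - 1))) ≤
        η * max (s t - s (t - 1)) 0 - η * (s t - s (t - 1)) := by
    intro t ht
    simp only [Finset.mem_Icc] at ht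
    have h1 : 0 ≤ ψ (t - 1) := hψnn _ (by omega)
    have h2 : ψ (t - 1) ≤ η := hψle _ (by omega)
    rcases le_or_gt 0 (s t - s (t - 1)) with h | h
    · rw [max_eq_left h]; nlinarith
    · rw [max_eq_right h.le]; nlinarith
  have hsumΔ : ∑ t ∈ Finset.Icc 1 T, (s t - s (t - 1)) = s T := by
    rw [sum_Icc_telescope s T, hs0]; ring
  have h3 : -∑ t ∈ Finset.Icc 1 T, ψ (t - 1) * (s t - s (t - 1)) ≤
      η * ∑ t ∈ Finset.Icc 1 T, max (s t - s (t - 1)) 0 - η * s T := by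
    rw [← hsumΔ, Finset.mul_sum, Finset.mul_sum, ← Finset.sum_sub_distrib,
      ← Finset.sum_neg_distrib]
    exact Finset.sum_le_sum hterm
  have h4 : ψ T * s T ≤ η * s T :=
    mul_le_mul_of_nonneg_right (hψle T le_rfl) hsT
  rw [key, hs0]
  simp only [mul_zero, sub_zero]
  linarith

/-- Weak-duality lower bound on the offline cost derived from the KKT conditions
of the regularized per-slot problem (convex operational costs). -/
theorem offline_lower_bound_convex
    (N T : ℕ) (hN : 1 ≤ N) (hT : 1 ≤ T)
    (ε : ℝ) (hε : 0 < ε)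
    (Dmax : ℝ) (hDmax : 0 < Dmax)
    (η : ℝ) (hη : η = Real.log (1 + N * Dmax / ε))
    (β : Fin N → ℝ) (hβ : ∀ i, 0 ≤ β i)
    (f : Fin N → ℕ → ℝ → ℝ)
    (hconv : ∀ i t, ConvexOn ℝ Set.univ (f i t))
    (hdiff : ∀ i t, Differentiable ℝ (f i t))
    (st : Fin N → ℕ → ℝ)
    (hst0 : ∀ i, st i 0 = 0)
    (hst_nonneg : ∀ i t, 0 ≤ st i t)
    (D : ℕ → ℝ)
    (hsum : ∀ t ∈ Finset.Icc 1 T, ∑ i, st i t = D t)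
    (hD : ∀ t ∈ Finset.Icc 1 T, 0 < D t ∧ D t ≤ Dmax)
    (lam : ℕ → ℝ) (hlam : ∀ t ∈ Finset.Icc 1 T, 0 ≤ lam t)
    (l : Fin N → ℕ → ℝ) (hl : ∀ i, ∀ t ∈ Finset.Icc 1 T, 0 ≤ l i t)
    (hcs : ∀ i, ∀ t ∈ Finset.Icc 1 T, st i t * l i t = 0)
    (hstat : ∀ i, ∀ t ∈ Finset.Icc 1 T,
      (β i / η) * Real.log ((st i t + ε / N) / (st i (t - 1) + ε / N)) =
        lam t - deriv (f i t) (st i t) + l i t) :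
    ∀ s : Fin N → ℕ → ℝ,
      (∀ i, s i 0 = 0) →
      (∀ i, ∀ t ∈ Finset.Icc 1 T, 0 ≤ s i t) →
      (∀ t ∈ Finset.Icc 1 T, D t ≤ ∑ i, s i t) →
      ∑ t ∈ Finset.Icc 1 T, ∑ i,
          (f i t (st i t) +
            (β i / η) * Real.log ((st i t + ε / N) / (st i (t - 1) + ε / N)) * st i t) ≤
        ∑ t ∈ Finset.Icc 1 T, ∑ i,
          (f i t (s i t) + β i * max (s i t - s i (t - 1)) 0) := by
  intro s hs0 hs_nonneg hfeas
  have hNpos : (0:ℝ) < N := by exact_mod_cast Nat.lt_of_lt_of_le Nat.zero_lt_one hN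
  set c : ℝ := ε / N with hc_def
  have hc : 0 < c := div_pos hε hNpos
  have hηpos : 0 < η := by
    rw [hη]
    apply Real.log_pos
    have : 0 < (N:ℝ) * Dmax / ε := div_pos (mul_pos hNpos hDmax) hε
    linarith
  -- potential function
  set ψ : Fin N → ℕ → ℝ := fun i t => Real.log ((st i t + c) / c) with hψ_def
  have hpos : ∀ i t, 0 < st i t + c := fun i t => by
    have := hst_nonneg i t; linarith
  have hψnn : ∀ i t, 0 ≤ ψ i t := by
    intro i t
    apply Real.log_nonneg
    rw [le_div_iff₀ hc]
    have := hst_nonneg i t; linarith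
  have hub : ∀ i, ∀ t ∈ Finset.Icc 1 T, st i t ≤ Dmax := by
    intro i t ht
    have h1 : st i t ≤ ∑ j, st j t :=
      Finset.single_le_sum (fun j _ => hst_nonneg j t) (Finset.mem_univ i)
    have h2 := (hD t ht).2
    rw [hsum t ht] at h1
    linarith
  have hψle : ∀ i, ∀ t ≤ T, ψ i t ≤ η := by
    intro i t htT
    rcases Nat.eq_zero_or_pos t with h0 | h1
    · subst h0
      simp only [hψ_def, hst0, zero_add, div_self hc.ne', Real.log_one]
      exact hηpos.le
    · have ht : t ∈ Finset.Icc 1 T := Finset.mem_Icc.2 ⟨h1, htT⟩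
      rw [hη, hψ_def]
      apply Real.log_le_log (div_pos (hpos i t) hc)
      rw [div_le_iff₀ hc, hc_def]
      have h2 := hub i t ht
      have h3 : (1 + (N:ℝ) * Dmax / ε) * (ε / N) = Dmax + ε / N := by
        field_simp; ring
      rw [h3]
      linarith
  -- rewrite logs as ψ differences
  have hlog : ∀ i t, Real.log ((st i t + c) / (st i (t - 1) + c)) =
      ψ i t - ψ i (t - 1) := by
    intro i t
    simp only [hψ_def]
    rw [Real.log_div (hpos i t).ne' hc.ne', Real.log_div (hpos i (t-1)).ne' hc.ne',
      Real.log_div (hpos i t).ne' (hpos i (t-1)).ne']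
    ring
  -- pointwise bound
  have hpoint : ∀ t ∈ Finset.Icc 1 T, ∀ i : Fin N,
      f i t (st i t) + (β i / η) * (ψ i t - ψ i (t - 1)) * st i t ≤
        f i t (s i t) - lam t * (s i t - st i t) - l i t * s i t +
          (β i / η) * (ψ i t - ψ i (t - 1)) * s i t := by
    intro t ht i
    have hst' := hstat i t ht
    rw [hlog i t] at hst'
    have tang := tangent_le_conv (f i t) (hconv i t) (hdiff i t) (st i t) (s i t)
    have hl0 := hcs i t ht
    set g := (β i / η) * (ψ i t - ψ i (t - 1)) with hg
    have hderiv : deriv (f i t) (st i t) = lam t - g + l i t := by linarith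
    rw [hderiv] at tang
    nlinarith [tang, hl0]
  -- main chain
  have step1 : ∑ t ∈ Finset.Icc 1 T, ∑ i,
      (f i t (st i t) + (β i / η) * (ψ i t - ψ i (t - 1)) * st i t) ≤
      ∑ t ∈ Finset.Icc 1 T, ∑ i,
      (f i t (s i t) - lam t * (s i t - st i t) - l i t * s i t +
        (β i / η) * (ψ i t - ψ i (t - 1)) * s i t) :=
    Finset.sum_le_sum fun t ht => Finset.sum_le_sum fun i _ => hpoint t ht i
  -- the g-term bound via telescoping
  have hgsum : ∑ t ∈ Finset.Icc 1 T, ∑ i,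
      (β i / η) * (ψ i t - ψ i (t - 1)) * s i t ≤
      ∑ t ∈ Finset.Icc 1 T, ∑ i, β i * max (s i t - s i (t - 1)) 0 := by
    rw [Finset.sum_comm, Finset.sum_comm (s := Finset.Icc 1 T)]
    apply Finset.sum_le_sum
    intro i _
    have htele := tele_bound T η (ψ i) (s i) (hs0 i) (fun t htT => hψnn i t)
      (fun t htT => hψle i t htT) (by
        rcases Nat.eq_zero_or_pos T with h0 | h1
        · rw [h0, hs0 i]
        · exact hs_nonneg i T (Finset.mem_Icc.2 ⟨h1, le_rfl⟩))
    calc ∑ t ∈ Finset.Icc 1 T, (β i / η) * (ψ i t - ψ i (t - 1)) * s i t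
        = (β i / η) * ∑ t ∈ Finset.Icc 1 T, (ψ i t - ψ i (t - 1)) * s i t := by
          rw [Finset.mul_sum]; exact Finset.sum_congr rfl fun t _ => by ring
      _ ≤ (β i / η) * (η * ∑ t ∈ Finset.Icc 1 T, max (s i t - s i (t - 1)) 0) := by
          apply mul_le_mul_of_nonneg_left htele (div_nonneg (hβ i) hηpos.le)
      _ = β i * ∑ t ∈ Finset.Icc 1 T, max (s i t - s i (t - 1)) 0 := by
          field_simp
      _ = ∑ t ∈ Finset.Icc 1 T, β i * max (s i t - s i (t - 1)) 0 := by
          rw [Finset.mul_sum]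
  -- lam term nonneg
  have hlamsum : 0 ≤ ∑ t ∈ Finset.Icc 1 T, ∑ i, lam t * (s i t - st i t) := by
    apply Finset.sum_nonneg
    intro t ht
    have : ∑ i, lam t * (s i t - st i t) = lam t * (∑ i, s i t - D t) := by
      rw [← hsum t ht, ← Finset.sum_sub_distrib, Finset.mul_sum]
    rw [this]
    exact mul_nonneg (hlam t ht) (sub_nonneg.2 (hfeas t ht))
  -- l term nonneg
  have hlsum : 0 ≤ ∑ t ∈ Finset.Icc 1 T, ∑ i, l i t * s i t := by
    apply Finset.sum_nonneg
    intro t ht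
    exact Finset.sum_nonneg fun i _ =>
      mul_nonneg (hl i t ht) (hs_nonneg i t ht)
  -- combine
  have step2 : ∑ t ∈ Finset.Icc 1 T, ∑ i,
      (f i t (s i t) - lam t * (s i t - st i t) - l i t * s i t +
        (β i / η) * (ψ i t - ψ i (t - 1)) * s i t) ≤
      ∑ t ∈ Finset.Icc 1 T, ∑ i,
      (f i t (s i t) + β i * max (s i t - s i (t - 1)) 0) := by
    have expand : ∀ (F G H K : ℕ → Fin N → ℝ),
        ∑ t ∈ Finset.Icc 1 T, ∑ i, (F t i - G t i - H t i + K t i) =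
          ∑ t ∈ Finset.Icc 1 T, ∑ i, F t i - ∑ t ∈ Finset.Icc 1 T, ∑ i, G t i -
            ∑ t ∈ Finset.Icc 1 T, ∑ i, H t i + ∑ t ∈ Finset.Icc 1 T, ∑ i, K t i := by
      intro F G H K
      rw [← Finset.sum_sub_distrib, ← Finset.sum_sub_distrib, ← Finset.sum_add_distrib]
      refine Finset.sum_congr rfl fun t _ => ?_
      rw [← Finset.sum_sub_distrib, ← Finset.sum_sub_distrib, ← Finset.sum_add_distrib]
    have expand2 : ∑ t ∈ Finset.Icc 1 T, ∑ i,
        (f i t (s i t) + β i * max (s i t - s i (t - 1)) 0) =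
        ∑ t ∈ Finset.Icc 1 T, ∑ i, f i t (s i t) +
          ∑ t ∈ Finset.Icc 1 T, ∑ i, β i * max (s i t - s i (t - 1)) 0 := by
      rw [← Finset.sum_add_distrib]
      exact Finset.sum_congr rfl fun t _ => by rw [← Finset.sum_add_distrib]
    rw [expand (fun t i => f i t (s i t)) (fun t i => lam t * (s i t - st i t))
      (fun t i => l i t * s i t)
      (fun t i => (β i / η) * (ψ i t - ψ i (t - 1)) * s i t), expand2]
    linarith
  -- put together, rewriting the goal's logs
  have goal_lhs : ∑ t ∈ Finset.Icc 1 T, ∑ i,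
      (f i t (st i t) +
        (β i / η) * Real.log ((st i t + c) / (st i (t - 1) + c)) * st i t) =
      ∑ t ∈ Finset.Icc 1 T, ∑ i,
      (f i t (st i t) + (β i / η) * (ψ i t - ψ i (t - 1)) * st i t) := by
    refine Finset.sum_congr rfl fun t _ => Finset.sum_congr rfl fun i _ => ?_
    rw [hlog i t]
  rw [goal_lhs]
  exact le_trans step1 step2
end

section
/- Let N ≥ 1 and T ≥ 1 be integers. For i = 1,…,N and t = 1,…,T let c_i(t) ∈ ℝ, β_i ≥ 0, r_i(t) ≥ 0, and D(t) ∈ ℝ. Suppose there are dual variables μ_{i,t} (t = 1,…,T+1) with 0 ≤ μ_{i,t} ≤ β_i for all t, μ_{i,T+1} = 0, and λ_t ≥ 0 such that c_i(t) + μ_{i,t} − μ_{i,t+1} − λ_t ≥ 0 for all i and t. Then every feasible schedule s satisfies ∑_{t=1}^T ∑_{i=1}^N [c_i(t)·s_i(t) + β_i·max(s_i(t) − s_i(t−1) − r_i(t), 0)] ≥ ∑_{t=1}^T λ_t·D(t) − ∑_{t=1}^T ∑_{i=1}^N μ_{i,t}·r_i(t). -/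
/-!
Pair each schedule with the dual variables. Since `0 ≤ μ_{i,t} ≤ β_i`, the switching cost
`β_i (Δs - r)⁺` dominates `μ_{i,t} (Δs - r)`; summation by parts, using `s_i(0) = 0` and
`μ_{i,T+1} = 0`, turns `∑_t μ_{i,t} Δs_i(t)` into `∑_t (μ_{i,t} - μ_{i,t+1}) s_i(t)`. Dual
feasibility and `s ≥ 0` then bound the resulting cost below by
`∑_t (λ_t s_i(t) - μ_{i,t} r_i(t))`, and summing over `i` with `λ ≥ 0` and the demand
constraint finishes the proof.
-/

open Finset

theorem sum_Icc_mul_sub_pred_eq {R : Type*} [CommRing R] (f g : ℕ → R) (T : ℕ) :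
    ∑ t ∈ Icc 1 T, g t * (f t - f (t - 1)) =
      ∑ t ∈ Icc 1 T, (g t - g (t + 1)) * f t + g (T + 1) * f T - g 1 * f 0 := by
  induction T with
  | zero => simp
  | succ T ih =>
    rw [sum_Icc_succ_top (by omega), sum_Icc_succ_top (by omega), ih, Nat.add_sub_cancel]
    ring

theorem mul_le_mul_max_zero {R : Type*} [Semiring R] [LinearOrder R] [IsOrderedRing R]
    {m b : R} (hm : 0 ≤ m) (hmb : m ≤ b) (x : R) :
    m * x ≤ b * max x 0 :=
  calc m * x ≤ m * max x 0 := mul_le_mul_of_nonneg_left (le_max_left x 0) hm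
    _ ≤ b * max x 0 := mul_le_mul_of_nonneg_right hmb (le_max_right x 0)

theorem sum_dual_objective_le_sum_cost (T : ℕ) (c r s μ lam : ℕ → ℝ) (β : ℝ)
    (hμ : ∀ t ∈ Icc 1 T, 0 ≤ μ t ∧ μ t ≤ β) (hμT : μ (T + 1) = 0)
    (hdual : ∀ t ∈ Icc 1 T, 0 ≤ c t + μ t - μ (t + 1) - lam t)
    (hs0 : s 0 = 0) (hs : ∀ t ∈ Icc 1 T, 0 ≤ s t) :
    ∑ t ∈ Icc 1 T, (lam t * s t - μ t * r t) ≤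
      ∑ t ∈ Icc 1 T, (c t * s t + β * max (s t - s (t - 1) - r t) 0) := by
  have hparts : ∑ t ∈ Icc 1 T, μ t * (s t - s (t - 1)) =
      ∑ t ∈ Icc 1 T, (μ t - μ (t + 1)) * s t := by
    rw [sum_Icc_mul_sub_pred_eq, hμT, hs0]
    ring
  calc ∑ t ∈ Icc 1 T, (lam t * s t - μ t * r t)
      ≤ ∑ t ∈ Icc 1 T, ((c t + μ t - μ (t + 1)) * s t - μ t * r t) :=
        sum_le_sum fun t ht => sub_le_sub_right
          (mul_le_mul_of_nonneg_right (by linarith [hdual t ht]) (hs t ht)) _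
    _ = ∑ t ∈ Icc 1 T, (c t * s t - μ t * r t) +
          ∑ t ∈ Icc 1 T, (μ t - μ (t + 1)) * s t := by
        rw [← sum_add_distrib]
        exact sum_congr rfl fun t _ => by ring
    _ = ∑ t ∈ Icc 1 T, (c t * s t + μ t * (s t - s (t - 1) - r t)) := by
        rw [← hparts, ← sum_add_distrib]
        exact sum_congr rfl fun t _ => by ring
    _ ≤ ∑ t ∈ Icc 1 T, (c t * s t + β * max (s t - s (t - 1) - r t) 0) :=
        sum_le_sum fun t ht =>
          add_le_add_right (mul_le_mul_max_zero (hμ t ht).1 (hμ t ht).2 _) _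

theorem offline_lower_bound_offset_general
    (N T : ℕ)
    (c : Fin N → ℕ → ℝ)
    (β : Fin N → ℝ)
    (r : Fin N → ℕ → ℝ)
    (D : ℕ → ℝ)
    (μ : Fin N → ℕ → ℝ)
    (hμ : ∀ i, ∀ t ∈ Finset.Icc 1 (T + 1), 0 ≤ μ i t ∧ μ i t ≤ β i)
    (hμT : ∀ i, μ i (T + 1) = 0)
    (lam : ℕ → ℝ) (hlam : ∀ t ∈ Finset.Icc 1 T, 0 ≤ lam t)
    (hdualfeas : ∀ i, ∀ t ∈ Finset.Icc 1 T,
      0 ≤ c i t + μ i t - μ i (t + 1) - lam t) :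
    ∀ s : Fin N → ℕ → ℝ,
      (∀ i, s i 0 = 0) →
      (∀ i, ∀ t ∈ Finset.Icc 1 T, 0 ≤ s i t) →
      (∀ t ∈ Finset.Icc 1 T, D t ≤ ∑ i, s i t) →
      (∑ t ∈ Finset.Icc 1 T, lam t * D t) -
          ∑ t ∈ Finset.Icc 1 T, ∑ i, μ i t * r i t ≤
        ∑ t ∈ Finset.Icc 1 T, ∑ i,
          (c i t * s i t + β i * max (s i t - s i (t - 1) - r i t) 0) := by
  intro s hs0 hs hfeas
  have hdemand : ∑ t ∈ Icc 1 T, lam t * D t ≤ ∑ t ∈ Icc 1 T, ∑ i, lam t * s i t :=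
    sum_le_sum fun t ht => by
      rw [← mul_sum]
      exact mul_le_mul_of_nonneg_left (hfeas t ht) (hlam t ht)
  have hagents := sum_le_sum fun i (_ : i ∈ univ) =>
    sum_dual_objective_le_sum_cost T (c i) (r i) (s i) (μ i) lam (β i)
      (fun t ht => hμ i t (Icc_subset_Icc_right (Nat.le_succ T) ht)) (hμT i)
      (hdualfeas i) (hs0 i) (hs i)
  rw [sum_comm, sum_comm (s := univ)] at hagents
  simp only [sum_sub_distrib] at hagents
  linarith

/-- Weak-duality lower bound for the offline problem with linear operational
costs and switching cost offsets. -/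
theorem offline_lower_bound_offset
    (N T : ℕ) (hN : 1 ≤ N) (hT : 1 ≤ T)
    (c : Fin N → ℕ → ℝ)
    (β : Fin N → ℝ) (hβ : ∀ i, 0 ≤ β i)
    (r : Fin N → ℕ → ℝ) (hr : ∀ i, ∀ t ∈ Finset.Icc 1 T, 0 ≤ r i t)
    (D : ℕ → ℝ)
    (μ : Fin N → ℕ → ℝ)
    (hμ : ∀ i, ∀ t ∈ Finset.Icc 1 (T + 1), 0 ≤ μ i t ∧ μ i t ≤ β i)
    (hμT : ∀ i, μ i (T + 1) = 0)
    (lam : ℕ → ℝ) (hlam : ∀ t ∈ Finset.Icc 1 T, 0 ≤ lam t)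
    (hdualfeas : ∀ i, ∀ t ∈ Finset.Icc 1 T,
      0 ≤ c i t + μ i t - μ i (t + 1) - lam t) :
    ∀ s : Fin N → ℕ → ℝ,
      (∀ i, s i 0 = 0) →
      (∀ i, ∀ t ∈ Finset.Icc 1 T, 0 ≤ s i t) →
      (∀ t ∈ Finset.Icc 1 T, D t ≤ ∑ i, s i t) →
      (∑ t ∈ Finset.Icc 1 T, lam t * D t) -
          ∑ t ∈ Finset.Icc 1 T, ∑ i, μ i t * r i t ≤
        ∑ t ∈ Finset.Icc 1 T, ∑ i,
          (c i t * s i t + β i * max (s i t - s i (t - 1) - r i t) 0) :=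
  offline_lower_bound_offset_general N T c β r D μ hμ hμT lam hlam hdualfeas
end

section
/- Fix a time slot t and let N ≥ 1, ε > 0, η > 0, D_min > 0. For i = 1,…,N let β_i ≥ 0, c_i(t) ≥ 0, r_i(t) ≥ 0, s̃_i(t−1) ≥ 0, s̃_i(t) ≥ 0, and let λ̃_t ≥ 0 and D(t) ≥ D_min satisfy ∑_{i=1}^N s̃_i(t) = D(t). Let L_t = {i : s̃_i(t) > s̃_i(t−1) + r_i(t)}, and suppose that for every i ∈ L_t the stationarity condition (β_i/η)·ln((s̃_i(t)+ε/N)/(s̃_i(t−1)+ε/N)) = λ̃_t − c_i(t) holds. Then ∑_{i∈L_t} β_i·(s̃_i(t) − s̃_i(t−1) − r_i(t)) ≤ η·(1 + ε/D_min)·λ̃_t·D(t). -/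
/-- Per-slot bound on the moving (switching) cost `M_t` of the online
regularization algorithm with switching cost offset, case `1 ≤ K_s ≤ K_c`. -/
theorem moving_cost_bound_case1
    (N : ℕ) (hN : 1 ≤ N)
    (ε : ℝ) (hε : 0 < ε)
    (η : ℝ) (hη : 0 < η)
    (Dmin : ℝ) (hDmin : 0 < Dmin)
    (β : Fin N → ℝ) (hβ : ∀ i, 0 ≤ β i)
    (c : Fin N → ℝ) (hc : ∀ i, 0 ≤ c i)
    (r : Fin N → ℝ) (hr : ∀ i, 0 ≤ r i)
    (sprev : Fin N → ℝ) (hsprev : ∀ i, 0 ≤ sprev i)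
    (scur : Fin N → ℝ) (hscur : ∀ i, 0 ≤ scur i)
    (lam : ℝ) (hlam : 0 ≤ lam)
    (Dt : ℝ) (hDt : Dmin ≤ Dt)
    (hsum : ∑ i, scur i = Dt)
    (hstat : ∀ i ∈ Finset.univ.filter (fun i => sprev i + r i < scur i),
      (β i / η) * Real.log ((scur i + ε / N) / (sprev i + ε / N)) = lam - c i) :
    ∑ i ∈ Finset.univ.filter (fun i => sprev i + r i < scur i),
        β i * (scur i - sprev i - r i) ≤
      η * (1 + ε / Dmin) * lam * Dt := by
  have hNpos : (0:ℝ) < N := by exact_mod_cast Nat.lt_of_lt_of_le Nat.zero_lt_one hN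
  have heN : 0 < ε / N := div_pos hε hNpos
  set L := Finset.univ.filter (fun i => sprev i + r i < scur i) with hL
  -- per-term bound
  have key : ∀ i ∈ L, β i * (scur i - sprev i - r i) ≤ η * lam * (scur i + ε / N) := by
    intro i hi
    set x := scur i + ε / N with hx
    set y := sprev i + ε / N with hy
    have hxpos : 0 < x := add_pos_of_nonneg_of_pos (hscur i) heN
    have hypos : 0 < y := add_pos_of_nonneg_of_pos (hsprev i) heN
    have hlog' : Real.log (y / x) ≤ y / x - 1 :=
      Real.log_le_sub_one_of_pos (div_pos hypos hxpos)
    have hlogdiv : Real.log (x / y) = - Real.log (y / x) := by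
      rw [← Real.log_inv]; congr 1; field_simp
    have h1 : x - y ≤ x * Real.log (x / y) := by
      rw [hlogdiv]
      have := mul_le_mul_of_nonneg_left hlog' (le_of_lt hxpos)
      have hxy : x * (y / x - 1) = y - x := by field_simp
      nlinarith
    have hstat2 : β i / η * Real.log (x / y) = lam - c i := hstat i hi
    have hβlog : β i * Real.log (x / y) = η * (lam - c i) := by
      field_simp at hstat2
      linarith
    have h2 : β i * (x - y) ≤ β i * (x * Real.log (x / y)) :=
      mul_le_mul_of_nonneg_left h1 (hβ i)
    have h3 : β i * (x * Real.log (x / y)) = x * (η * (lam - c i)) := by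
      rw [← hβlog]; ring
    have h4 : x * (η * (lam - c i)) ≤ η * lam * x := by
      have h40 : 0 ≤ x * η * c i := mul_nonneg (mul_nonneg hxpos.le hη.le) (hc i)
      nlinarith
    have h5 : β i * (scur i - sprev i - r i) ≤ β i * (x - y) := by
      have : scur i - sprev i - r i ≤ x - y := by simp [hx, hy]; linarith [hr i]
      exact mul_le_mul_of_nonneg_left this (hβ i)
    calc β i * (scur i - sprev i - r i) ≤ β i * (x - y) := h5
      _ ≤ β i * (x * Real.log (x / y)) := h2
      _ = x * (η * (lam - c i)) := h3
      _ ≤ η * lam * x := h4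
  have step1 : ∑ i ∈ L, β i * (scur i - sprev i - r i) ≤
      ∑ i ∈ L, η * lam * (scur i + ε / N) := Finset.sum_le_sum key
  have step2 : ∑ i ∈ L, η * lam * (scur i + ε / N) ≤
      ∑ i : Fin N, η * lam * (scur i + ε / N) := by
    apply Finset.sum_le_sum_of_subset_of_nonneg (Finset.filter_subset _ _)
    intro i _ _
    have := hscur i
    positivity
  have step3 : ∑ i : Fin N, η * lam * (scur i + ε / N) = η * lam * (Dt + ε) := by
    rw [← Finset.mul_sum, Finset.sum_add_distrib, hsum, Finset.sum_const,
      Finset.card_univ, Fintype.card_fin, nsmul_eq_mul]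
    field_simp
  have step4 : η * lam * (Dt + ε) ≤ η * (1 + ε / Dmin) * lam * Dt := by
    have hDtpos : 0 < Dt := lt_of_lt_of_le hDmin hDt
    have : ε ≤ ε * Dt / Dmin := by
      rw [le_div_iff₀ hDmin]; nlinarith
    have h := mul_le_mul_of_nonneg_left this (mul_nonneg hη.le hlam)
    have heq : η * (1 + ε / Dmin) * lam * Dt = η * lam * (Dt + ε * Dt / Dmin) := by
      field_simp
    rw [heq]; nlinarith
  linarith [step1, step2, step3.le, step4, step3.ge]
end

section
/- Let N ≥ 1, T ≥ 1, ε > 0, η > 0, and for i = 1,…,N let β_i ≥ 0. Let s̃_i(t) (t = 0,…,T) satisfy s̃_i(0) = 0 and s̃_i(t) ≥ 0, let z̃_i(t) satisfy z̃_i(t) ≥ s̃_i(t−1) for all i and t, and let D(t) satisfy ∑_{i=1}^N s̃_i(t) = D(t) for all t = 1,…,T. Suppose there exist λ̃_t and l̃_{i,t} ≥ 0 with s̃_i(t)·l̃_{i,t} = 0 and (β_i/η)·ln((z̃_i(t)+ε/N)/(s̃_i(t−1)+ε/N)) = λ̃_t − c_i(t) + l̃_{i,t} for all i and t. Then ∑_{t=1}^T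 ∑_{i=1}^N c_i(t)·s̃_i(t) ≤ ∑_{t=1}^T λ̃_t·D(t). -/
/-- Bound on the total operating cost `S` of the online regularization
algorithm with switching cost offset, case `K_s > K_c` or `K_s < 1`, where the
regularizer is evaluated at the offset-shifted point `z̃_i(t) ≥ s̃_i(t-1)`. -/
theorem operating_cost_bound_case2
    (N T : ℕ) (hN : 1 ≤ N) (hT : 1 ≤ T)
    (ε : ℝ) (hε : 0 < ε)
    (η : ℝ) (hη : 0 < η)
    (β : Fin N → ℝ) (hβ : ∀ i, 0 ≤ β i)
    (c : Fin N → ℕ → ℝ)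
    (st : Fin N → ℕ → ℝ)
    (hst0 : ∀ i, st i 0 = 0)
    (hst_nonneg : ∀ i t, 0 ≤ st i t)
    (z : Fin N → ℕ → ℝ)
    (hz : ∀ i, ∀ t ∈ Finset.Icc 1 T, st i (t - 1) ≤ z i t)
    (D : ℕ → ℝ)
    (hsum : ∀ t ∈ Finset.Icc 1 T, ∑ i, st i t = D t)
    (lam : ℕ → ℝ)
    (l : Fin N → ℕ → ℝ) (hl : ∀ i, ∀ t ∈ Finset.Icc 1 T, 0 ≤ l i t)
    (hcs : ∀ i, ∀ t ∈ Finset.Icc 1 T, st i t * l i t = 0)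
    (hstat : ∀ i, ∀ t ∈ Finset.Icc 1 T,
      (β i / η) * Real.log ((z i t + ε / N) / (st i (t - 1) + ε / N)) =
        lam t - c i t + l i t) :
    ∑ t ∈ Finset.Icc 1 T, ∑ i, c i t * st i t ≤
      ∑ t ∈ Finset.Icc 1 T, lam t * D t := by
  apply Finset.sum_le_sum
  intro t ht
  rw [← hsum t ht, Finset.mul_sum]
  apply Finset.sum_le_sum
  intro i _
  have hεN : 0 < ε / N := div_pos hε (by exact_mod_cast hN)
  have hden : 0 < st i (t - 1) + ε / N := by
    have := hst_nonneg i (t - 1); linarith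
  have hlog : 0 ≤ Real.log ((z i t + ε / N) / (st i (t - 1) + ε / N)) := by
    apply Real.log_nonneg
    rw [le_div_iff₀ hden]
    have := hz i t ht
    linarith
  have hnn : 0 ≤ lam t - c i t + l i t := by
    rw [← hstat i t ht]
    exact mul_nonneg (div_nonneg (hβ i) hη.le) hlog
  have hcs' := hcs i t ht
  nlinarith [hst_nonneg i t, mul_nonneg (hst_nonneg i t) hnn]
end

section
/- Let N ≥ 1, ε > 0, D_min > 0, D_max > 0, r > 0, c > 0, β ≥ 0, and suppose K_c ≥ max{2·(1 + ε/D_min)·D_max·β/(r·c), 1}. Set η = K_c·ln(1 + N·D_max/ε) and assume η·(1 + ε/D_min) ≥ 1. Let z and s' be real numbers with 0 ≤ s' ≤ z ≤ D_max, and let D be a real number with 0 ≤ D ≤ D_max. Then (η·r/(1 + η·(1 + ε/D_min)))·[c + (β/η)·ln((z + ε/N)/(s' + ε/N))] ≥ (β/η)·ln((z + ε/N)/(s' + ε/N))·D. -/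
set_option maxHeartbeats 1000000


/-- The key per-term inequality derived from the definition of `K_c` in the
competitive analysis of the online regularization algorithm with switching
cost offset (case `K_s > K_c` or `K_s < 1`). -/
theorem Kc_key_inequality
    (N : ℕ) (hN : 1 ≤ N)
    (ε : ℝ) (hε : 0 < ε)
    (Dmin : ℝ) (hDmin : 0 < Dmin)
    (Dmax : ℝ) (hDmax : 0 < Dmax)
    (r : ℝ) (hr : 0 < r)
    (c : ℝ) (hc : 0 < c)
    (β : ℝ) (hβ : 0 ≤ β)
    (Kc : ℝ) (hKc : max (2 * (1 + ε / Dmin) * Dmax * β / (r * c)) 1 ≤ Kc)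
    (η : ℝ) (hη : η = Kc * Real.log (1 + N * Dmax / ε))
    (hη1 : 1 ≤ η * (1 + ε / Dmin))
    (z s' : ℝ) (hs' : 0 ≤ s') (hsz : s' ≤ z) (hz : z ≤ Dmax)
    (D : ℝ) (hD0 : 0 ≤ D) (hD : D ≤ Dmax) :
    (β / η) * Real.log ((z + ε / N) / (s' + ε / N)) * D ≤
      (η * r / (1 + η * (1 + ε / Dmin))) *
        (c + (β / η) * Real.log ((z + ε / N) / (s' + ε / N))) := by
  set P := 1 + ε / Dmin with hP
  have hP1 : (1:ℝ) < P := by have := div_pos hε hDmin; simp [hP]; linarith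
  have hNpos : (0:ℝ) < (N:ℝ) := by exact_mod_cast hN
  have hεN : 0 < ε / N := div_pos hε hNpos
  have hM1 : (1:ℝ) < 1 + (N:ℝ) * Dmax / ε := by
    have : 0 < (N:ℝ) * Dmax / ε := by positivity
    linarith
  have hlogM : 0 < Real.log (1 + (N:ℝ) * Dmax / ε) := Real.log_pos hM1
  have hKc1 : (1:ℝ) ≤ Kc := le_trans (le_max_right _ _) hKc
  have hKcβ : 2 * P * Dmax * β / (r * c) ≤ Kc := le_trans (le_max_left _ _) hKc
  have hKcpos : 0 < Kc := by linarith
  have hηpos : 0 < η := by rw [hη]; exact mul_pos hKcpos hlogM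
  have hden : 0 < s' + ε / N := by linarith
  set L := Real.log ((z + ε / N) / (s' + ε / N)) with hLdef
  have hL0 : 0 ≤ L := by
    apply Real.log_nonneg
    rw [le_div_iff₀ hden]
    linarith
  have hkey : ε / N * ((N:ℝ) * Dmax / ε) = Dmax := by field_simp
  have hLle : L ≤ Real.log (1 + (N:ℝ) * Dmax / ε) := by
    apply Real.log_le_log (div_pos (by linarith) hden)
    rw [div_le_iff₀ hden]
    have h1 : 0 ≤ s' * ((N:ℝ) * Dmax / ε) := by positivity
    nlinarith
  have hA : β / η * L ≤ β / Kc := by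
    have h1 : β / η * L = β * L / (Kc * Real.log (1 + (N:ℝ) * Dmax / ε)) := by
      rw [hη]; ring
    have h2 : β / Kc = β * Real.log (1 + (N:ℝ) * Dmax / ε) /
        (Kc * Real.log (1 + (N:ℝ) * Dmax / ε)) := by
      rw [mul_div_mul_right _ _ hlogM.ne']
    rw [h1, h2]
    gcongr
  have hA0 : 0 ≤ β / η * L := mul_nonneg (div_nonneg hβ hηpos.le) hL0
  have hstep1 : β / Kc * Dmax ≤ r * c / (2 * P) := by
    rw [div_mul_eq_mul_div, div_le_div_iff₀ hKcpos (by linarith)]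
    rw [div_le_iff₀ (by positivity)] at hKcβ
    nlinarith
  have hdenom : 0 < 1 + η * P := by nlinarith
  have hstep2 : r * c / (2 * P) ≤ η * r / (1 + η * P) * c := by
    rw [div_mul_eq_mul_div, div_le_div_iff₀ (by linarith) hdenom]
    nlinarith [mul_le_mul_of_nonneg_left hη1 (mul_pos hr hc).le]
  have hfac : 0 ≤ η * r / (1 + η * P) := by positivity
  have h3 : β / η * L * D ≤ β / η * L * Dmax := by
    apply mul_le_mul_of_nonneg_left hD hA0
  have h4 : β / η * L * Dmax ≤ β / Kc * Dmax := by
    apply mul_le_mul_of_nonneg_right hA hDmax.le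
  calc β / η * L * D ≤ η * r / (1 + η * P) * c := by linarith
    _ ≤ η * r / (1 + η * P) * (c + β / η * L) := by nlinarith
end
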